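/- arXiv:1711.00050 — 3 statements merged into one kernel-verified Lean document; each statement's English description precedes it below -/
import Mathlib

section
/- Let G be a group generated by a finite symmetric set S, and suppose G has exponential word growth, i.e. there exists c > 1 such that |B(r)| ≥ c^r for all natural numbers r. Then there exists a non-constant harmonic function f : G → ℝ with f(g) > 0 for every g ∈ G. -/
open scoped ENNReal
open Filter Topology

namespace ExpHarm

variable {G : Type*} [Group G]

open Classical in
/-- n-step distribution of the simple random walk. -/
noncomputable def pp (S : Finset G) : ℕ → G → ℝ≥0∞
  | 0, x => if x = 1 then 1 else 0
  | (m+1), x => (S.card : ℝ≥0∞)⁻¹ * ∑ s ∈ S, pp S m (x * s)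

variable (S : Finset G)

lemma dE_ne_zero (hS : S.Nonempty) : (S.card : ℝ≥0∞) ≠ 0 := by
  simp [Finset.card_ne_zero_of_mem hS.choose_spec]

lemma dE_ne_top : (S.card : ℝ≥0∞) ≠ ⊤ := by simp

lemma tsum_pp (hS : S.Nonempty) (m : ℕ) : ∑' x : G, pp S m x = 1 := by
  induction m with
  | zero =>
    rw [tsum_eq_single (1 : G)]
    · simp [pp]
    · intro x hx; simp [pp, hx]
  | succ m ih =>
    have : ∀ x : G, pp S (m+1) x = (S.card : ℝ≥0∞)⁻¹ * ∑ s ∈ S, pp S m (x * s) := fun _ => rfl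
    simp only [this]
    rw [ENNReal.tsum_mul_left, Summable.tsum_finsetSum (fun _ _ => ENNReal.summable)]
    have h1 : ∀ s ∈ S, ∑' x : G, pp S m (x * s) = 1 := by
      intro s _
      rw [show (fun x : G => pp S m (x * s)) = (fun x => pp S m ((Equiv.mulRight s) x)) from rfl,
        Equiv.tsum_eq (Equiv.mulRight s) (pp S m), ih]
    rw [Finset.sum_congr rfl h1]
    simp only [Finset.sum_const, nsmul_eq_mul, mul_one]
    exact ENNReal.inv_mul_cancel (dE_ne_zero S hS) (dE_ne_top S)

lemma pp_le_one (hS : S.Nonempty) (m : ℕ) (x : G) : pp S m x ≤ 1 := by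
  calc pp S m x ≤ ∑' y : G, pp S m y := ENNReal.le_tsum x
  _ = 1 := tsum_pp S hS m

lemma tsum_pp_mul (j : ℕ) : ∀ (k : ℕ) (y : G),
    ∑' x : G, pp S j x * pp S k (x⁻¹ * y) = pp S (j + k) y := by
  intro k
  induction k with
  | zero =>
    intro y
    rw [tsum_eq_single y]
    · simp [pp]
    · intro x hx
      have : x⁻¹ * y ≠ 1 := fun h => hx (by rwa [inv_mul_eq_one] at h)
      simp [pp, this]
  | succ k ih =>
    intro y
    have hr : ∀ x : G, pp S (k+1) (x⁻¹ * y) = (S.card : ℝ≥0∞)⁻¹ * ∑ s ∈ S, pp S k (x⁻¹ * y * s) :=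
      fun _ => rfl
    calc ∑' x : G, pp S j x * pp S (k+1) (x⁻¹ * y)
        = ∑' x : G, ∑ s ∈ S, (S.card : ℝ≥0∞)⁻¹ * (pp S j x * pp S k (x⁻¹ * (y * s))) := by
          refine tsum_congr fun x => ?_
          rw [hr, Finset.mul_sum, Finset.mul_sum]
          refine Finset.sum_congr rfl fun s _ => ?_
          have hgrp : x⁻¹ * y * s = x⁻¹ * (y * s) := mul_assoc _ _ _
          rw [hgrp]
          ring
      _ = ∑ s ∈ S, (S.card : ℝ≥0∞)⁻¹ * ∑' x : G, pp S j x * pp S k (x⁻¹ * (y * s)) := by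
          rw [Summable.tsum_finsetSum (fun _ _ => ENNReal.summable)]
          exact Finset.sum_congr rfl fun s _ => (ENNReal.tsum_mul_left).symm ▸ rfl
      _ = (S.card : ℝ≥0∞)⁻¹ * ∑ s ∈ S, pp S (j + k) (y * s) := by
          rw [← Finset.mul_sum]
          congr 1
          exact Finset.sum_congr rfl fun s _ => ih (y * s)
      _ = pp S (j + (k+1)) y := by
          rw [show j + (k+1) = (j + k) + 1 from rfl]
          rfl

lemma pp_word (hsymm : ∀ s ∈ S, s⁻¹ ∈ S) :
    ∀ (L : List G), (∀ s ∈ L, s ∈ S) →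
      ((S.card : ℝ≥0∞)⁻¹) ^ L.length ≤ pp S L.length L.prod := by
  intro L
  induction L using List.reverseRecOn with
  | nil => simp [pp]
  | append_singleton M a ihM =>
    intro hL
    have ha : a ∈ S := hL a (by simp)
    have hM : ∀ s ∈ M, s ∈ S := fun s hs => hL s (by simp [hs])
    have hlen : (M ++ [a]).length = M.length + 1 := by simp
    have hprod : (M ++ [a]).prod = M.prod * a := by simp
    rw [hlen, hprod]
    have key : pp S (M.length + 1) (M.prod * a)
        = (S.card : ℝ≥0∞)⁻¹ * ∑ s ∈ S, pp S M.length (M.prod * a * s) := rfl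
    rw [key, pow_succ]
    have h1 : pp S M.length M.prod ≤ ∑ s ∈ S, pp S M.length (M.prod * a * s) := by
      have := Finset.single_le_sum (f := fun s => pp S M.length (M.prod * a * s))
        (fun i _ => zero_le) (hsymm a ha)
      simpa using this
    calc ((S.card : ℝ≥0∞)⁻¹) ^ M.length * (S.card : ℝ≥0∞)⁻¹
        ≤ pp S M.length M.prod * (S.card : ℝ≥0∞)⁻¹ := by
          exact mul_le_mul_left (ihM hM) _
      _ = (S.card : ℝ≥0∞)⁻¹ * pp S M.length M.prod := mul_comm _ _
      _ ≤ (S.card : ℝ≥0∞)⁻¹ * ∑ s ∈ S, pp S M.length (M.prod * a * s) :=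
          mul_le_mul_right h1 _


/-- Green function at parameter `t`. -/
noncomputable def uu (S : Finset G) (t : ℝ≥0∞) (x : G) : ℝ≥0∞ := ∑' m : ℕ, t ^ m * pp S m x

lemma uu_le (t : ℝ≥0∞) (x : G) (hS : S.Nonempty) : uu S t x ≤ (1 - t)⁻¹ := by
  calc uu S t x ≤ ∑' m : ℕ, t ^ m * 1 :=
        ENNReal.tsum_le_tsum fun m => mul_le_mul_right (pp_le_one S hS m x) _
    _ = (1 - t)⁻¹ := by simp [ENNReal.tsum_geometric]

lemma uu_lt_top {t : ℝ≥0∞} (ht : t < 1) (x : G) (hS : S.Nonempty) : uu S t x < ⊤ := by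
  refine lt_of_le_of_lt (uu_le S t x hS) ?_
  rw [ENNReal.inv_lt_top]
  exact tsub_pos_of_lt ht

lemma uu_mono {t t' : ℝ≥0∞} (h : t ≤ t') (x : G) : uu S t x ≤ uu S t' x :=
  ENNReal.tsum_le_tsum fun m => mul_le_mul_left (pow_le_pow_left' h m) _

open Classical in
lemma uu_identity (t : ℝ≥0∞) (x : G) :
    uu S t x = (if x = 1 then 1 else 0)
      + t * ((S.card : ℝ≥0∞)⁻¹ * ∑ s ∈ S, uu S t (x * s)) := by
  have h0 : uu S t x = t ^ 0 * pp S 0 x + ∑' m : ℕ, t ^ (m+1) * pp S (m+1) x :=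
    tsum_eq_zero_add' ENNReal.summable
  rw [h0]
  congr 1
  · classical simp [pp]
  · have hterm : ∀ m : ℕ, t ^ (m+1) * pp S (m+1) x
        = ∑ s ∈ S, t * ((S.card : ℝ≥0∞)⁻¹ * (t ^ m * pp S m (x * s))) := by
      intro m
      have : pp S (m+1) x = (S.card : ℝ≥0∞)⁻¹ * ∑ s ∈ S, pp S m (x * s) := rfl
      rw [this, pow_succ, Finset.mul_sum, Finset.mul_sum]
      refine Finset.sum_congr rfl fun s _ => by ring
    calc ∑' m : ℕ, t ^ (m+1) * pp S (m+1) x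
        = ∑' m : ℕ, ∑ s ∈ S, t * ((S.card : ℝ≥0∞)⁻¹ * (t ^ m * pp S m (x * s))) :=
          tsum_congr hterm
      _ = ∑ s ∈ S, ∑' m : ℕ, t * ((S.card : ℝ≥0∞)⁻¹ * (t ^ m * pp S m (x * s))) :=
          Summable.tsum_finsetSum (fun _ _ => ENNReal.summable)
      _ = ∑ s ∈ S, t * ((S.card : ℝ≥0∞)⁻¹ * uu S t (x * s)) := by
          refine Finset.sum_congr rfl fun s _ => ?_
          rw [ENNReal.tsum_mul_left, ENNReal.tsum_mul_left]
          rfl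
      _ = t * ((S.card : ℝ≥0∞)⁻¹ * ∑ s ∈ S, uu S t (x * s)) := by
          rw [Finset.mul_sum, Finset.mul_sum]

lemma uu_ge_single (t : ℝ≥0∞) (x : G) {s : G} (hs : s ∈ S) :
    t * ((S.card : ℝ≥0∞)⁻¹ * uu S t (x * s)) ≤ uu S t x := by
  rw [uu_identity S t x]
  refine le_add_of_nonneg_of_le (zero_le) ?_
  refine mul_le_mul_right (mul_le_mul_right ?_ _) _
  exact Finset.single_le_sum (f := fun s => uu S t (x * s)) (fun i _ => zero_le) hs

/-- lower Harnack -/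
lemma uu_harnack_lower (hsymm : ∀ s ∈ S, s⁻¹ ∈ S) (t : ℝ≥0∞) (x : G) {s : G} (hs : s ∈ S) :
    t * ((S.card : ℝ≥0∞)⁻¹ * uu S t x) ≤ uu S t (x * s) := by
  have := uu_ge_single S t (x * s) (hsymm s hs)
  simpa using this

/-- upper Harnack -/
lemma uu_harnack_upper (hS : S.Nonempty) {t : ℝ≥0∞} (ht0 : t ≠ 0) (ht1 : t ≤ 1)
    (x : G) {s : G} (hs : s ∈ S) :
    uu S t (x * s) ≤ t⁻¹ * ((S.card : ℝ≥0∞) * uu S t x) := by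
  have h := uu_ge_single S t x hs
  have httop : t ≠ ⊤ := fun h => by simp [h] at ht1
  have key : uu S t (x * s)
      = t⁻¹ * ((S.card : ℝ≥0∞) * (t * ((S.card : ℝ≥0∞)⁻¹ * uu S t (x * s)))) := by
    rw [show t⁻¹ * ((S.card : ℝ≥0∞) * (t * ((S.card : ℝ≥0∞)⁻¹ * uu S t (x * s))))
        = (t⁻¹ * t) * (((S.card : ℝ≥0∞)) * ((S.card : ℝ≥0∞))⁻¹) * uu S t (x * s) by ring]
    rw [ENNReal.inv_mul_cancel ht0 httop,
      ENNReal.mul_inv_cancel (dE_ne_zero S hS) (dE_ne_top S), one_mul, one_mul]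
  rw [key]
  exact mul_le_mul_right (mul_le_mul_right h _) _

lemma uu_pos (hgen : ∀ g : G, ∃ L : List G, (∀ s ∈ L, s ∈ S) ∧ L.prod = g)
    (hsymm : ∀ s ∈ S, s⁻¹ ∈ S) {t : ℝ≥0∞} (ht : t ≠ 0) (x : G) : 0 < uu S t x := by
  obtain ⟨L, hL, hprod⟩ := hgen x
  have h1 : ((S.card : ℝ≥0∞)⁻¹) ^ L.length ≤ pp S L.length L.prod := pp_word S hsymm L hL
  have h2 : t ^ L.length * ((S.card : ℝ≥0∞)⁻¹) ^ L.length ≤ uu S t x := by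
    calc t ^ L.length * ((S.card : ℝ≥0∞)⁻¹) ^ L.length
        ≤ t ^ L.length * pp S L.length x := by rw [← hprod]; exact mul_le_mul_right h1 _
      _ ≤ uu S t x := ENNReal.le_tsum L.length
  refine lt_of_lt_of_le ?_ h2
  have h3 : (t : ℝ≥0∞) ^ L.length ≠ 0 := pow_ne_zero _ ht
  have h4 : ((S.card : ℝ≥0∞)⁻¹) ^ L.length ≠ 0 :=
    pow_ne_zero _ (ENNReal.inv_ne_zero.mpr (dE_ne_top S))
  exact ENNReal.mul_pos h3 h4

/-- the key ℓ² bound -/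
lemma key_bound (hS : S.Nonempty) (t : ℝ≥0∞) :
    ∑' x : G, uu S t x * uu S t x⁻¹ ≤ (1 - t)⁻¹ * (1 - t)⁻¹ := by
  have expand : ∀ x : G, uu S t x * uu S t x⁻¹
      = ∑' j : ℕ, ∑' k : ℕ, (t ^ j * t ^ k) * (pp S j x * pp S k x⁻¹) := by
    intro x
    rw [uu, ← ENNReal.tsum_mul_right]
    refine tsum_congr fun j => ?_
    rw [uu, ← ENNReal.tsum_mul_left]
    exact tsum_congr fun k => by ring
  calc ∑' x : G, uu S t x * uu S t x⁻¹
      = ∑' j : ℕ, ∑' k : ℕ, (t ^ j * t ^ k) * ∑' x : G, pp S j x * pp S k x⁻¹ := by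
        rw [tsum_congr expand, ENNReal.tsum_comm]
        refine tsum_congr fun j => ?_
        rw [ENNReal.tsum_comm]
        exact tsum_congr fun k => ENNReal.tsum_mul_left.symm ▸ rfl
    _ ≤ ∑' j : ℕ, ∑' k : ℕ, (t ^ j * t ^ k) := by
        refine ENNReal.tsum_le_tsum fun j => ENNReal.tsum_le_tsum fun k => ?_
        have : ∑' x : G, pp S j x * pp S k x⁻¹ = pp S (j + k) 1 := by
          have := tsum_pp_mul S j k 1
          simpa using this
        rw [this]
        calc (t ^ j * t ^ k) * pp S (j+k) 1 ≤ (t ^ j * t ^ k) * 1 :=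
              mul_le_mul_right (pp_le_one S hS _ _) _
          _ = t ^ j * t ^ k := by rw [mul_one]
    _ = (1 - t)⁻¹ * (1 - t)⁻¹ := by
        have h1 : ∀ j : ℕ, ∑' k : ℕ, t ^ j * t ^ k = t ^ j * (1-t)⁻¹ := fun j => by
          rw [ENNReal.tsum_mul_left, ENNReal.tsum_geometric]
        calc ∑' j : ℕ, ∑' k : ℕ, t ^ j * t ^ k = ∑' j : ℕ, t ^ j * (1-t)⁻¹ := tsum_congr h1
          _ = (1-t)⁻¹ * (1-t)⁻¹ := by rw [ENNReal.tsum_mul_right, ENNReal.tsum_geometric]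


/-! ### the sequence of parameters -/

noncomputable def tt (n : ℕ) : ℝ≥0∞ := 1 - ((n : ℝ≥0∞) + 2)⁻¹

lemma inv_n2_le_half (n : ℕ) : ((n : ℝ≥0∞) + 2)⁻¹ ≤ 2⁻¹ := by
  apply ENNReal.inv_le_inv'
  simp

lemma inv_n2_le_one (n : ℕ) : ((n : ℝ≥0∞) + 2)⁻¹ ≤ 1 := by
  refine le_trans (inv_n2_le_half n) ?_
  simp [ENNReal.inv_le_one]

lemma one_sub_tt (n : ℕ) : 1 - tt n = ((n : ℝ≥0∞) + 2)⁻¹ :=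
  ENNReal.sub_sub_cancel (by simp) (inv_n2_le_one n)

lemma one_sub_tt_inv (n : ℕ) : (1 - tt n)⁻¹ = (n : ℝ≥0∞) + 2 := by
  rw [one_sub_tt, inv_inv]

lemma tt_lt_one (n : ℕ) : tt n < 1 := by
  apply ENNReal.sub_lt_self (by simp) (by simp)
  simp [ENNReal.inv_ne_zero]

lemma tt_le_one (n : ℕ) : tt n ≤ 1 := (tt_lt_one n).le

lemma half_le_tt (n : ℕ) : 2⁻¹ ≤ tt n := by
  have h1 : (1:ℝ≥0∞) - 2⁻¹ ≤ 1 - ((n : ℝ≥0∞) + 2)⁻¹ := tsub_le_tsub_left (inv_n2_le_half n) 1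
  have h2 : (1:ℝ≥0∞) - 2⁻¹ = 2⁻¹ := by
    rw [ENNReal.sub_eq_of_eq_add (by simp)]
    rw [ENNReal.inv_two_add_inv_two]
  rw [← h2]; exact h1

lemma tt_ne_zero (n : ℕ) : tt n ≠ 0 :=
  fun h => by simpa [h] using (half_le_tt n)

lemma toReal_n2 (n : ℕ) : ((n : ℝ≥0∞) + 2).toReal = (n:ℝ) + 2 := by
  rw [ENNReal.toReal_add (by simp) (by simp)]
  simp

lemma tt_toReal (n : ℕ) : (tt n).toReal = 1 - ((n : ℝ) + 2)⁻¹ := by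
  rw [tt, ENNReal.toReal_sub_of_le (inv_n2_le_one n) (by simp), ENNReal.toReal_inv, toReal_n2]
  simp

lemma tt_toReal_lt_one (n : ℕ) : (tt n).toReal < 1 := by
  rw [tt_toReal]
  have : (0:ℝ) < ((n:ℝ)+2)⁻¹ := by positivity
  linarith

lemma tt_toReal_half (n : ℕ) : (1:ℝ)/2 ≤ (tt n).toReal := by
  rw [tt_toReal]
  have h : ((n:ℝ)+2)⁻¹ ≤ 1/2 := by
    rw [inv_le_comm₀ ((by positivity : (0:ℝ) < (n:ℝ)+2)) (by norm_num)]
    · norm_num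
  linarith

lemma tt_toReal_tendsto : Tendsto (fun n : ℕ => (tt n).toReal) atTop (𝓝 1) := by
  simp only [tt_toReal]
  have h1 : Tendsto (fun n : ℕ => ((n:ℝ)+2)) atTop atTop :=
    tendsto_atTop_add_const_right _ _ tendsto_natCast_atTop_atTop
  have h2 : Tendsto (fun n : ℕ => ((n:ℝ)+2)⁻¹) atTop (𝓝 0) := h1.inv_tendsto_atTop
  simpa using tendsto_const_nhds.sub h2

/-! ### real-valued Green functions -/

noncomputable def vv (S : Finset G) (n : ℕ) (x : G) : ℝ := (uu S (tt n) x).toReal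

lemma vv_nonneg (n : ℕ) (x : G) : 0 ≤ vv S n x := ENNReal.toReal_nonneg

lemma vv_pos (hS : S.Nonempty) (hgen : ∀ g : G, ∃ L : List G, (∀ s ∈ L, s ∈ S) ∧ L.prod = g)
    (hsymm : ∀ s ∈ S, s⁻¹ ∈ S) (n : ℕ) (x : G) : 0 < vv S n x := by
  apply ENNReal.toReal_pos
  · exact (uu_pos S hgen hsymm (tt_ne_zero n) x).ne'
  · exact (uu_lt_top S (tt_lt_one n) x hS).ne

lemma vv_one_ge (hS : S.Nonempty) (n : ℕ) : 1 ≤ vv S n 1 := by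
  have h : (1:ℝ≥0∞) ≤ uu S (tt n) 1 := by
    have := ENNReal.le_tsum (f := fun m => (tt n) ^ m * pp S m (1:G)) 0
    simpa [pp, uu] using this
  calc (1:ℝ) = (1:ℝ≥0∞).toReal := by simp
    _ ≤ vv S n 1 := ENNReal.toReal_mono (uu_lt_top S (tt_lt_one n) 1 hS).ne h

open Classical in
lemma vv_identity (hS : S.Nonempty) (n : ℕ) (y : G) :
    vv S n y = (if y = 1 then (1:ℝ) else 0)
      + (tt n).toReal * ((1/(S.card : ℝ)) * ∑ s ∈ S, vv S n (y * s)) := by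
  have hfin : ∀ z : G, uu S (tt n) z ≠ ⊤ := fun z => (uu_lt_top S (tt_lt_one n) z hS).ne
  have hid := uu_identity S (tt n) y
  have h1 : ((if y = 1 then (1:ℝ≥0∞) else 0)).toReal = (if y = 1 then (1:ℝ) else 0) := by
    split <;> simp
  have h2 : (((S.card : ℝ≥0∞))⁻¹ * ∑ s ∈ S, uu S (tt n) (y * s)).toReal
      = (1/(S.card:ℝ)) * ∑ s ∈ S, vv S n (y * s) := by
    rw [ENNReal.toReal_mul, ENNReal.toReal_inv, ENNReal.toReal_sum (fun s _ => hfin _)]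
    simp [one_div, vv]
  calc vv S n y = ((if y = 1 then (1:ℝ≥0∞) else 0)
        + tt n * (((S.card : ℝ≥0∞))⁻¹ * ∑ s ∈ S, uu S (tt n) (y * s))).toReal := by
        rw [vv, ← hid]
    _ = _ := by
        rw [ENNReal.toReal_add, ENNReal.toReal_mul, h1, h2]
        · split <;> simp
        · apply ENNReal.mul_ne_top (by simp [tt])
          apply ENNReal.mul_ne_top (ENNReal.inv_ne_top.mpr (dE_ne_zero S hS))
          exact (ENNReal.sum_lt_top.mpr (fun s _ => (uu_lt_top S (tt_lt_one n) _ hS))).ne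

lemma vv_harnack_lower (hS : S.Nonempty) (hsymm : ∀ s ∈ S, s⁻¹ ∈ S) (n : ℕ) (x : G)
    {s : G} (hs : s ∈ S) :
    (1/(2*(S.card : ℝ))) * vv S n x ≤ vv S n (x * s) := by
  have hE : 2⁻¹ * ((S.card : ℝ≥0∞)⁻¹ * uu S (tt n) x) ≤ uu S (tt n) (x * s) := by
    refine le_trans ?_ (uu_harnack_lower S hsymm (tt n) x hs)
    exact mul_le_mul_left (half_le_tt n) _
  have hmono := ENNReal.toReal_mono (uu_lt_top S (tt_lt_one n) _ hS).ne hE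
  have hL : ((2⁻¹ : ℝ≥0∞) * ((S.card : ℝ≥0∞)⁻¹ * uu S (tt n) x)).toReal
      = (1/(2*(S.card:ℝ))) * vv S n x := by
    rw [ENNReal.toReal_mul, ENNReal.toReal_mul, ENNReal.toReal_inv, ENNReal.toReal_inv]
    simp only [ENNReal.toReal_ofNat, ENNReal.toReal_natCast, vv]
    ring
  rw [← hL]
  exact hmono

lemma vv_harnack_upper (hS : S.Nonempty) (n : ℕ) (x : G) {s : G} (hs : s ∈ S) :
    vv S n (x * s) ≤ (2*(S.card : ℝ)) * vv S n x := by
  have hE : uu S (tt n) (x * s) ≤ 2 * ((S.card : ℝ≥0∞) * uu S (tt n) x) := by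
    refine le_trans (uu_harnack_upper S hS (tt_ne_zero n) (tt_le_one n) x hs) ?_
    refine mul_le_mul_left ?_ _
    rw [← inv_inv (2:ℝ≥0∞)]
    exact ENNReal.inv_le_inv' (half_le_tt n)
  have hfin : 2 * ((S.card : ℝ≥0∞) * uu S (tt n) x) ≠ ⊤ := by
    apply ENNReal.mul_ne_top (by simp)
    exact ENNReal.mul_ne_top (by simp) (uu_lt_top S (tt_lt_one n) x hS).ne
  have := ENNReal.toReal_mono hfin hE
  rw [ENNReal.toReal_mul, ENNReal.toReal_mul] at this
  simpa [vv, mul_assoc] using this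

lemma sum_vv_le (hS : S.Nonempty) (n : ℕ) (F : Finset G) :
    ∑ w ∈ F, vv S n w * vv S n w⁻¹ ≤ ((n:ℝ) + 2)^2 := by
  have hfin : ∀ z : G, uu S (tt n) z ≠ ⊤ := fun z => (uu_lt_top S (tt_lt_one n) z hS).ne
  have hE : ∑ w ∈ F, uu S (tt n) w * uu S (tt n) w⁻¹ ≤ ((n:ℝ≥0∞)+2) * ((n:ℝ≥0∞)+2) := by
    calc ∑ w ∈ F, uu S (tt n) w * uu S (tt n) w⁻¹
        ≤ ∑' w : G, uu S (tt n) w * uu S (tt n) w⁻¹ := ENNReal.sum_le_tsum F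
      _ ≤ (1 - tt n)⁻¹ * (1 - tt n)⁻¹ := key_bound S hS (tt n)
      _ = ((n:ℝ≥0∞)+2) * ((n:ℝ≥0∞)+2) := by rw [one_sub_tt_inv]
  have := ENNReal.toReal_mono
    (ENNReal.mul_ne_top (by simp [toReal_n2]) (by simp [toReal_n2])) hE
  rw [ENNReal.toReal_sum (fun w _ => ENNReal.mul_ne_top (hfin _) (hfin _)),
    ENNReal.toReal_mul] at this
  calc ∑ w ∈ F, vv S n w * vv S n w⁻¹
      = ∑ w ∈ F, (uu S (tt n) w * uu S (tt n) w⁻¹).toReal := by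
        refine Finset.sum_congr rfl fun w _ => ?_
        rw [ENNReal.toReal_mul]; rfl
    _ ≤ (((n:ℝ≥0∞)+2)).toReal * (((n:ℝ≥0∞)+2)).toReal := this
    _ = ((n:ℝ) + 2)^2 := by
        rw [toReal_n2, sq]


/-! ### word length and balls -/

noncomputable def wl (S : Finset G) (x : G) : ℕ :=
  sInf {n | ∃ L : List G, L.length ≤ n ∧ (∀ s ∈ L, s ∈ S) ∧ L.prod = x}

section WL

lemma wlSet_nonempty (hgen : ∀ g : G, ∃ L : List G, (∀ s ∈ L, s ∈ S) ∧ L.prod = g) (x : G) :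
    {n | ∃ L : List G, L.length ≤ n ∧ (∀ s ∈ L, s ∈ S) ∧ L.prod = x}.Nonempty := by
  obtain ⟨L, hL, hp⟩ := hgen x
  exact ⟨L.length, L, le_rfl, hL, hp⟩

lemma wl_le {x : G} {L : List G} (hL : ∀ s ∈ L, s ∈ S) (hp : L.prod = x) :
    wl S x ≤ L.length :=
  Nat.sInf_le ⟨L, le_rfl, hL, hp⟩

lemma wl_exact (hgen : ∀ g : G, ∃ L : List G, (∀ s ∈ L, s ∈ S) ∧ L.prod = g) (x : G) :
    ∃ L : List G, L.length = wl S x ∧ (∀ s ∈ L, s ∈ S) ∧ L.prod = x := by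
  obtain ⟨L, hlen, hL, hp⟩ := Nat.sInf_mem (wlSet_nonempty S hgen x)
  exact ⟨L, le_antisymm hlen (wl_le S hL hp), hL, hp⟩

lemma wl_one : wl S (1 : G) = 0 :=
  Nat.le_zero.mp (wl_le S (L := []) (by simp) (by simp))

lemma wl_eq_zero (hgen : ∀ g : G, ∃ L : List G, (∀ s ∈ L, s ∈ S) ∧ L.prod = g)
    {x : G} (h : wl S x = 0) : x = 1 := by
  obtain ⟨L, hlen, _, hp⟩ := wl_exact S hgen x
  rw [h, List.length_eq_zero_iff] at hlen
  rw [← hp, hlen, List.prod_nil]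

lemma wl_decomp (hgen : ∀ g : G, ∃ L : List G, (∀ s ∈ L, s ∈ S) ∧ L.prod = g)
    {x : G} {ℓ : ℕ} (h : wl S x = ℓ + 1) :
    ∃ (y : G) (s : G), s ∈ S ∧ x = y * s ∧ wl S y = ℓ := by
  obtain ⟨L, hlen, hL, hp⟩ := wl_exact S hgen x
  rcases L.eq_nil_or_concat with rfl | ⟨M, a, rfl⟩
  · simp [h] at hlen
  · have hlen' : M.length + 1 = ℓ + 1 := by simpa [h] using hlen
    have hM : ∀ s ∈ M, s ∈ S := fun s hs => hL s (by simp [List.concat_eq_append, hs])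
    have ha : a ∈ S := hL a (by simp [List.concat_eq_append])
    have hprod : M.prod * a = x := by simpa [List.concat_eq_append] using hp
    refine ⟨M.prod, a, ha, hprod.symm ▸ rfl, le_antisymm ?_ ?_⟩
    · have := wl_le S hM (rfl : M.prod = M.prod)
      omega
    · by_contra hlt
      push_neg at hlt
      obtain ⟨M', hM'len, hM', hM'p⟩ := wl_exact S hgen M.prod
      have hx : (M' ++ [a]).prod = x := by simp [hM'p, hprod]
      have hxS : ∀ s ∈ M' ++ [a], s ∈ S := by
        intro s hs
        rcases List.mem_append.mp hs with h1 | h1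
        · exact hM' s h1
        · simp at h1; exact h1 ▸ ha
      have := wl_le S hxS hx
      simp only [List.length_append, List.length_singleton] at this
      omega

lemma wl_inv (hgen : ∀ g : G, ∃ L : List G, (∀ s ∈ L, s ∈ S) ∧ L.prod = g)
    (hsymm : ∀ s ∈ S, s⁻¹ ∈ S) (x : G) : wl S x⁻¹ ≤ wl S x := by
  obtain ⟨L, hlen, hL, hp⟩ := wl_exact S hgen x
  have h1 : ∀ s ∈ (L.map (fun y : G => y⁻¹)).reverse, s ∈ S := by
    intro s hs
    rw [List.mem_reverse, List.mem_map] at hs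
    obtain ⟨a, ha, rfl⟩ := hs
    exact hsymm a (hL a ha)
  have h2 : ((L.map (fun y : G => y⁻¹)).reverse).prod = x⁻¹ := by
    rw [← List.prod_inv_reverse, hp]
  calc wl S x⁻¹ ≤ ((L.map (fun y : G => y⁻¹)).reverse).length := wl_le S h1 h2
    _ = wl S x := by simp [hlen]

lemma wl_inv_eq (hgen : ∀ g : G, ∃ L : List G, (∀ s ∈ L, s ∈ S) ∧ L.prod = g)
    (hsymm : ∀ s ∈ S, s⁻¹ ∈ S) (x : G) : wl S x⁻¹ = wl S x := by
  refine le_antisymm (wl_inv S hgen hsymm x) ?_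
  have := wl_inv S hgen hsymm x⁻¹
  simpa using this

end WL

def Bset (S : Finset G) (r : ℕ) : Set G :=
  {g : G | ∃ L : List G, L.length ≤ r ∧ (∀ s ∈ L, s ∈ S) ∧ L.prod = g}

lemma mem_Bset_iff (hgen : ∀ g : G, ∃ L : List G, (∀ s ∈ L, s ∈ S) ∧ L.prod = g)
    (r : ℕ) (x : G) : x ∈ Bset S r ↔ wl S x ≤ r := by
  constructor
  · rintro ⟨L, hlen, hL, hp⟩
    exact le_trans (wl_le S hL hp) hlen
  · intro h
    obtain ⟨L, hlen, hL, hp⟩ := wl_exact S hgen x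
    exact ⟨L, by omega, hL, hp⟩

lemma Bset_finite (r : ℕ) : (Bset S r).Finite := by
  induction r with
  | zero =>
    refine Set.Finite.subset (Set.finite_singleton (1 : G)) ?_
    rintro x ⟨L, hlen, _, hp⟩
    rw [Nat.le_zero, List.length_eq_zero_iff] at hlen
    simp [← hp, hlen]
  | succ r ih =>
    refine Set.Finite.subset (Set.Finite.union ih
      (Set.Finite.biUnion S.finite_toSet
        (fun s _ => ih.image (fun y => y * s)))) ?_
    rintro x ⟨L, hlen, hL, hp⟩
    rcases L.eq_nil_or_concat with rfl | ⟨M, a, rfl⟩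
    · left
      exact ⟨[], by simp, by simp, hp⟩
    · have hM : ∀ s ∈ M, s ∈ S := fun s hs => hL s (by simp [List.concat_eq_append, hs])
      have ha : a ∈ S := hL a (by simp [List.concat_eq_append])
      have hlenM : M.length ≤ r := by
        simp only [List.concat_eq_append, List.length_append, List.length_singleton] at hlen
        omega
      right
      refine Set.mem_biUnion ha ⟨M.prod, ⟨M, hlenM, hM, rfl⟩, ?_⟩
      simpa [List.concat_eq_append] using hp

/-! ### Harnack chains along words -/

lemma vv_word_upper (hS : S.Nonempty) (n : ℕ) (z : G) :
    ∀ L : List G, (∀ s ∈ L, s ∈ S) →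
      vv S n (z * L.prod) ≤ (2*(S.card : ℝ)) ^ L.length * vv S n z := by
  intro L
  induction L using List.reverseRecOn with
  | nil => simp
  | append_singleton M a ih =>
    intro hL
    have hM : ∀ s ∈ M, s ∈ S := fun s hs => hL s (by simp [hs])
    have ha : a ∈ S := hL a (by simp)
    have h1 : vv S n (z * (M ++ [a]).prod) ≤ (2*(S.card:ℝ)) * vv S n (z * M.prod) := by
      have : z * (M ++ [a]).prod = (z * M.prod) * a := by
        simp [mul_assoc]
      rw [this]
      exact vv_harnack_upper S hS n _ ha
    calc vv S n (z * (M ++ [a]).prod) ≤ (2*(S.card:ℝ)) * vv S n (z * M.prod) := h1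
      _ ≤ (2*(S.card:ℝ)) * ((2*(S.card:ℝ)) ^ M.length * vv S n z) := by
          have hd : (0:ℝ) ≤ 2*(S.card:ℝ) := by positivity
          exact mul_le_mul_of_nonneg_left (ih hM) hd
      _ = (2*(S.card:ℝ)) ^ (M ++ [a]).length * vv S n z := by
          simp [pow_succ]; ring

lemma vv_le_pow_wl (hS : S.Nonempty)
    (hgen : ∀ g : G, ∃ L : List G, (∀ s ∈ L, s ∈ S) ∧ L.prod = g) (n : ℕ) (z x : G) :
    vv S n (z * x) ≤ (2*(S.card : ℝ)) ^ (wl S x) * vv S n z := by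
  obtain ⟨L, hlen, hL, hp⟩ := wl_exact S hgen x
  calc vv S n (z * x) = vv S n (z * L.prod) := by rw [hp]
    _ ≤ (2*(S.card : ℝ)) ^ L.length * vv S n z := vv_word_upper S hS n z L hL
    _ = (2*(S.card : ℝ)) ^ (wl S x) * vv S n z := by rw [hlen]


/-! ### ultrafilter limits -/

lemma exists_ulim (U : Ultrafilter ℕ) (f : ℕ → ℝ) (C : ℝ)
    (h : ∀ᶠ k in (U : Filter ℕ), f k ∈ Set.Icc (0:ℝ) C) :
    ∃ a : ℝ, 0 ≤ a ∧ Tendsto f (U : Filter ℕ) (𝓝 a) := by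
  have hle : (U.map f : Filter ℝ) ≤ Filter.principal (Set.Icc (0:ℝ) C) := by
    rw [Ultrafilter.coe_map, le_principal_iff, Filter.mem_map]
    exact h
  obtain ⟨a, ha, hlim⟩ := (isCompact_Icc (a := (0:ℝ)) (b := C)).ultrafilter_le_nhds
    (U.map f) hle
  refine ⟨a, ha.1, ?_⟩
  rwa [Ultrafilter.coe_map] at hlim

/-- The central contradiction lemma: an ultralimit of nonnegative, normalized,
asymptotically harmonic kernels that stay `≤ 1 - ε` at `σ` contradicts the assumption
that positive harmonic functions are constant. -/
lemma ultralimit_contra (hS : S.Nonempty)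
    (hgen : ∀ g : G, ∃ L : List G, (∀ s ∈ L, s ∈ S) ∧ L.prod = g)
    (HC : ∀ f : G → ℝ, (∀ g, 0 < f g) →
      (∀ g, f g = (1/(S.card : ℝ)) * ∑ s ∈ S, f (g * s)) → ∀ a b : G, f a = f b)
    (U : Ultrafilter ℕ) (K : ℕ → G → ℝ) (σ : G) (ε : ℝ) (hε : 0 < ε)
    (hbd : ∀ x : G, ∃ C : ℝ, ∀ᶠ k in (U : Filter ℕ), K k x ∈ Set.Icc (0:ℝ) C)
    (hdef : ∀ x : G, Tendsto
      (fun k => K k x - (1/(S.card : ℝ)) * ∑ s ∈ S, K k (x * s)) (U : Filter ℕ) (𝓝 0))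
    (hone : ∀ᶠ k in (U : Filter ℕ), K k 1 = 1)
    (hsig : ∀ᶠ k in (U : Filter ℕ), K k σ ≤ 1 - ε) : False := by
  have hcard : (0:ℝ) < (S.card : ℝ) := by
    have := hS.card_pos
    positivity
  -- build the limit function
  have hlim : ∀ x : G, ∃ a : ℝ, 0 ≤ a ∧ Tendsto (fun k => K k x) (U : Filter ℕ) (𝓝 a) := by
    intro x
    obtain ⟨C, hC⟩ := hbd x
    exact exists_ulim U _ C hC
  choose h h0 hT using hlim
  -- h is harmonic
  have hharm : ∀ g : G, h g = (1/(S.card : ℝ)) * ∑ s ∈ S, h (g * s) := by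
    intro g
    have T1 : Tendsto (fun k => (1/(S.card : ℝ)) * ∑ s ∈ S, K k (g * s)) (U : Filter ℕ)
        (𝓝 ((1/(S.card : ℝ)) * ∑ s ∈ S, h (g * s))) := by
      apply Tendsto.const_mul
      exact tendsto_finset_sum _ (fun s _ => hT (g * s))
    have T2 : Tendsto (fun k => K k g - (1/(S.card : ℝ)) * ∑ s ∈ S, K k (g * s))
        (U : Filter ℕ) (𝓝 (h g - (1/(S.card : ℝ)) * ∑ s ∈ S, h (g * s))) :=
      (hT g).sub T1
    have := tendsto_nhds_unique T2 (hdef g)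
    linarith [this]
  -- h 1 = 1
  have hone' : h 1 = 1 := by
    refine tendsto_nhds_unique ?_
      (tendsto_const_nhds : Tendsto (fun _ : ℕ => (1:ℝ)) (U : Filter ℕ) (𝓝 1))
    exact (hT 1).congr' (hone.mono fun k hk => by simp [hk])
  -- h σ ≤ 1 - ε
  have hsig' : h σ ≤ 1 - ε := le_of_tendsto (hT σ) hsig
  -- zero set propagates
  have hzero : ∀ g : G, h g = 0 → ∀ s ∈ S, h (g * s) = 0 := by
    intro g hg s hs
    have hsum : ∑ s ∈ S, h (g * s) = 0 := by
      have := hharm g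
      rw [hg] at this
      have h2 : (1/(S.card : ℝ)) ≠ 0 := one_div_ne_zero hcard.ne'
      have := (mul_eq_zero.mp this.symm).resolve_left h2
      linarith [this]
    have := (Finset.sum_eq_zero_iff_of_nonneg (fun s _ => h0 (g * s))).mp hsum s hs
    exact this
  -- h positive
  have hpos : ∀ g : G, 0 < h g := by
    intro g
    rcases lt_or_eq_of_le (h0 g) with h' | h'
    · exact h'
    · exfalso
      have hlist : ∀ L : List G, (∀ s ∈ L, s ∈ S) → ∀ g' : G, h g' = 0 →
          h (g' * L.prod) = 0 := by
        intro L
        induction L with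
        | nil => intro _ g' hg'; simpa using hg'
        | cons a M ih =>
          intro hL g' hg'
          have ha : a ∈ S := hL a (by simp)
          have hM : ∀ s ∈ M, s ∈ S := fun s hs => hL s (by simp [hs])
          have hga : h (g' * a) = 0 := hzero g' hg' a ha
          have := ih hM (g' * a) hga
          rw [List.prod_cons, ← mul_assoc]
          exact this
      obtain ⟨L, hL, hp⟩ := hgen g⁻¹
      have := hlist L hL g h'.symm
      rw [hp] at this
      simp at this
      rw [this] at hone'
      norm_num at hone'
  -- contradiction
  have := HC h hpos hharm σ 1
  rw [hone'] at this
  linarith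


/-! ### limits as t → 1 -/

lemma tt_mono : Monotone tt := by
  intro a b hab
  refine tsub_le_tsub_left (ENNReal.inv_le_inv' ?_) 1
  have : (a : ℝ≥0∞) ≤ (b : ℝ≥0∞) := by exact_mod_cast hab
  exact add_le_add_left this 2

lemma tt_tendsto_one : Tendsto tt atTop (𝓝 (1 : ℝ≥0∞)) := by
  have h1 : Tendsto tt atTop (𝓝 (⨆ n, tt n)) := tendsto_atTop_iSup tt_mono
  have h2 : (⨆ n, tt n) = 1 := by
    refine le_antisymm (iSup_le tt_le_one) ?_
    by_contra hlt
    push_neg at hlt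
    set a := ⨆ n, tt n with ha
    have ha1 : a < 1 := hlt
    have hne : (1:ℝ≥0∞) - a ≠ 0 := (tsub_pos_of_lt ha1).ne'
    obtain ⟨n, hn⟩ := ENNReal.exists_inv_nat_lt hne
    have h3 : tt n ≤ a := le_iSup tt n
    have h4 : (1:ℝ≥0∞) ≤ a + ((n:ℝ≥0∞) + 2)⁻¹ := by
      rw [tt] at h3
      exact tsub_le_iff_right.mp h3
    have h5 : ((n:ℝ≥0∞) + 2)⁻¹ ≤ ((n:ℝ≥0∞))⁻¹ :=
      ENNReal.inv_le_inv' (by simp)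
    have h6 : (1:ℝ≥0∞) < a + (1 - a) := by
      calc (1:ℝ≥0∞) ≤ a + ((n:ℝ≥0∞) + 2)⁻¹ := h4
        _ ≤ a + ((n:ℝ≥0∞))⁻¹ := add_le_add_right h5 a
        _ < a + (1 - a) := by
            exact ENNReal.add_lt_add_left ha1.ne_top hn
    rw [add_tsub_cancel_of_le ha1.le] at h6
    exact lt_irrefl _ h6
  rwa [h2] at h1

lemma uu_tendsto_one (y : G) (m : ℕ → ℕ) (hm : StrictMono m) :
    Tendsto (fun k => uu S (tt (m k)) y) atTop (𝓝 (uu S 1 y)) := by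
  have hmono : Monotone (fun k => uu S (tt (m k)) y) :=
    fun a b hab => uu_mono S (tt_mono (hm.monotone hab)) y
  have h1 : Tendsto (fun k => uu S (tt (m k)) y) atTop (𝓝 (⨆ k, uu S (tt (m k)) y)) :=
    tendsto_atTop_iSup hmono
  have h2 : (⨆ k, uu S (tt (m k)) y) = uu S 1 y := by
    refine le_antisymm (iSup_le fun k => uu_mono S (tt_le_one (m k)) y) ?_
    have hexp : uu S 1 y = ∑' i : ℕ, pp S i y := by
      rw [uu]; exact tsum_congr fun i => by rw [one_pow, one_mul]
    rw [hexp, ENNReal.tsum_eq_iSup_sum]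
    refine iSup_le fun F => ?_
    set B := F.sup id with hB
    have hterm : ∀ k, (tt (m k)) ^ B * ∑ i ∈ F, pp S i y ≤ uu S (tt (m k)) y := by
      intro k
      rw [Finset.mul_sum]
      calc ∑ i ∈ F, (tt (m k)) ^ B * pp S i y
          ≤ ∑ i ∈ F, (tt (m k)) ^ i * pp S i y := by
            refine Finset.sum_le_sum fun i hi => ?_
            refine mul_le_mul_left ?_ _
            exact pow_le_pow_right_of_le_one' (tt_le_one _) (Finset.le_sup (f := id) hi)
        _ ≤ ∑' i : ℕ, (tt (m k)) ^ i * pp S i y := ENNReal.sum_le_tsum F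
        _ = uu S (tt (m k)) y := rfl
    have hTle : Tendsto (fun k => (tt (m k)) ^ B * ∑ i ∈ F, pp S i y) atTop
        (𝓝 ((1:ℝ≥0∞) ^ B * ∑ i ∈ F, pp S i y)) := by
      apply ENNReal.Tendsto.mul_const
      · exact (ENNReal.Tendsto.pow (tt_tendsto_one.comp (hm.tendsto_atTop)))
      · left; simp
    rw [one_pow, one_mul] at hTle
    exact le_of_tendsto hTle (Eventually.of_forall fun k => le_trans (hterm k)
      (le_iSup (fun k => uu S (tt (m k)) y) k))
  rwa [h2] at h1

lemma vv_tendsto_Ur (hfin : uu S 1 y ≠ ⊤) (m : ℕ → ℕ) (hm : StrictMono m) :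
    Tendsto (fun k => vv S (m k) y) atTop (𝓝 ((uu S 1 y).toReal)) :=
  (ENNReal.tendsto_toReal hfin).comp (uu_tendsto_one S y m hm)

lemma vv_tendsto_atTop (hS : S.Nonempty) {z : G} (htop : uu S 1 z = ⊤)
    (m : ℕ → ℕ) (hm : StrictMono m) :
    Tendsto (fun k => vv S (m k) z) atTop atTop := by
  have h1 := uu_tendsto_one S z m hm
  rw [htop] at h1
  rw [ENNReal.tendsto_nhds_top_iff_nat] at h1
  rw [tendsto_atTop]
  intro b
  obtain ⟨j, hj⟩ := exists_nat_ge b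
  filter_upwards [h1 j] with k hk
  calc b ≤ (j : ℝ) := hj
    _ ≤ vv S (m k) z := by
      rw [vv]
      have : ((j : ℝ≥0∞)).toReal ≤ (uu S (tt (m k)) z).toReal :=
        ENNReal.toReal_mono (uu_lt_top S (tt_lt_one _) z hS).ne hk.le
      simpa using this

/-! ### t = 1 Green function -/

lemma uu_one_word_upper (hS : S.Nonempty) (z : G) :
    ∀ L : List G, (∀ s ∈ L, s ∈ S) →
      uu S 1 (z * L.prod) ≤ ((S.card : ℝ≥0∞)) ^ L.length * uu S 1 z := by
  intro L
  induction L using List.reverseRecOn with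
  | nil => simp
  | append_singleton M a ih =>
    intro hL
    have hM : ∀ s ∈ M, s ∈ S := fun s hs => hL s (by simp [hs])
    have ha : a ∈ S := hL a (by simp)
    have h1 : uu S 1 (z * (M ++ [a]).prod) ≤ (S.card : ℝ≥0∞) * uu S 1 (z * M.prod) := by
      have heq : z * (M ++ [a]).prod = (z * M.prod) * a := by simp [mul_assoc]
      rw [heq]
      have := uu_harnack_upper S hS (t := 1) one_ne_zero le_rfl (z * M.prod) ha
      simpa using this
    calc uu S 1 (z * (M ++ [a]).prod) ≤ (S.card : ℝ≥0∞) * uu S 1 (z * M.prod) := h1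
      _ ≤ (S.card : ℝ≥0∞) * (((S.card : ℝ≥0∞)) ^ M.length * uu S 1 z) :=
          mul_le_mul_right (ih hM) _
      _ = ((S.card : ℝ≥0∞)) ^ (M ++ [a]).length * uu S 1 z := by
          simp [pow_succ]; ring

lemma uu_one_le_pow_wl (hS : S.Nonempty)
    (hgen : ∀ g : G, ∃ L : List G, (∀ s ∈ L, s ∈ S) ∧ L.prod = g) (z x : G) :
    uu S 1 (z * x) ≤ ((S.card : ℝ≥0∞)) ^ (wl S x) * uu S 1 z := by
  obtain ⟨L, hlen, hL, hp⟩ := wl_exact S hgen x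
  calc uu S 1 (z * x) = uu S 1 (z * L.prod) := by rw [hp]
    _ ≤ ((S.card : ℝ≥0∞)) ^ L.length * uu S 1 z := uu_one_word_upper S hS z L hL
    _ = _ := by rw [hlen]

lemma uu_one_ne_top (hS : S.Nonempty)
    (hgen : ∀ g : G, ∃ L : List G, (∀ s ∈ L, s ∈ S) ∧ L.prod = g)
    (hfin : uu S 1 (1:G) ≠ ⊤) (x : G) : uu S 1 x ≠ ⊤ := by
  have := uu_one_le_pow_wl S hS hgen 1 x
  rw [one_mul] at this
  intro htop
  rw [htop] at this
  exact (ENNReal.mul_ne_top (by simp) hfin) (top_le_iff.mp this)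

lemma uu_one_eq_top (hS : S.Nonempty)
    (hgen : ∀ g : G, ∃ L : List G, (∀ s ∈ L, s ∈ S) ∧ L.prod = g)
    (hsymm : ∀ s ∈ S, s⁻¹ ∈ S)
    (htop : uu S 1 (1:G) = ⊤) (z : G) : uu S 1 z = ⊤ := by
  by_contra hz
  have h1 : uu S 1 (z * z⁻¹) ≤ ((S.card : ℝ≥0∞)) ^ (wl S z⁻¹) * uu S 1 z :=
    uu_one_le_pow_wl S hS hgen z z⁻¹
  rw [mul_inv_cancel, htop] at h1
  exact (ENNReal.mul_ne_top (by simp) hz) (top_le_iff.mp h1)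

open Classical in
lemma uuR_identity_one (hS : S.Nonempty)
    (hgen : ∀ g : G, ∃ L : List G, (∀ s ∈ L, s ∈ S) ∧ L.prod = g)
    (hfin : uu S 1 (1:G) ≠ ⊤) (y : G) :
    (uu S 1 y).toReal = (if y = 1 then (1:ℝ) else 0)
      + (1/(S.card : ℝ)) * ∑ s ∈ S, (uu S 1 (y * s)).toReal := by
  have hfin' : ∀ z : G, uu S 1 z ≠ ⊤ := uu_one_ne_top S hS hgen hfin
  have hid := uu_identity S 1 y
  rw [one_mul] at hid
  have h1 : ((if y = 1 then (1:ℝ≥0∞) else 0)).toReal = (if y = 1 then (1:ℝ) else 0) := by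
    split <;> simp
  calc (uu S 1 y).toReal
      = ((if y = 1 then (1:ℝ≥0∞) else 0)
          + (((S.card : ℝ≥0∞))⁻¹ * ∑ s ∈ S, uu S 1 (y * s))).toReal := by rw [← hid]
    _ = _ := by
        rw [ENNReal.toReal_add, h1, ENNReal.toReal_mul, ENNReal.toReal_inv,
          ENNReal.toReal_sum (fun s _ => hfin' _)]
        · simp [one_div]
        · split <;> simp
        · apply ENNReal.mul_ne_top (ENNReal.inv_ne_top.mpr (dE_ne_zero S hS))
          exact (ENNReal.sum_lt_top.mpr (fun s _ => (hfin' _).lt_top)).ne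


/-! ### auxiliary: ultrafilter fibers, defect formula -/

lemma ultra_fiber_aux (U : Ultrafilter ℕ) (f : ℕ → G) :
    ∀ T : Finset G, {k | f k ∈ T} ∈ U → ∃ t ∈ T, {k | f k = t} ∈ U := by
  classical
  intro T
  induction T using Finset.induction with
  | empty =>
    intro hmem
    simp only [Finset.notMem_empty] at hmem
    exact absurd hmem (by simpa using U.empty_not_mem)
  | @insert a T' hni ih =>
    intro hmem
    have hsplit : {k | f k ∈ insert a T'} = {k | f k = a} ∪ {k | f k ∈ T'} := by
      ext k; simp [Finset.mem_insert]
    rw [hsplit, Ultrafilter.union_mem_iff] at hmem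
    rcases hmem with h1 | h2
    · exact ⟨a, Finset.mem_insert_self a T', h1⟩
    · obtain ⟨t, ht, htU⟩ := ih h2
      exact ⟨t, Finset.mem_insert_of_mem ht, htU⟩

lemma ultra_fiber (U : Ultrafilter ℕ) (T : Finset G) (f : ℕ → G) (h : ∀ k, f k ∈ T) :
    ∃ t ∈ T, {k | f k = t} ∈ U := by
  refine ultra_fiber_aux U f T ?_
  have : {k | f k ∈ T} = Set.univ := Set.eq_univ_of_forall h
  rw [this]; exact Filter.univ_mem

lemma wl_mul_le (hgen : ∀ g : G, ∃ L : List G, (∀ s ∈ L, s ∈ S) ∧ L.prod = g)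
    {x s : G} (hs : s ∈ S) : wl S (x * s) ≤ wl S x + 1 := by
  obtain ⟨L, hlen, hL, hp⟩ := wl_exact S hgen x
  have h1 : ∀ a ∈ L ++ [s], a ∈ S := by
    intro a ha
    rcases List.mem_append.mp ha with h' | h'
    · exact hL a h'
    · simp at h'; exact h' ▸ hs
  have h2 : (L ++ [s]).prod = x * s := by simp [hp]
  have := wl_le S h1 h2
  simpa [hlen] using this

open Classical in
lemma defect_formula (hS : S.Nonempty) (n : ℕ) (z x : G) (hz : vv S n z ≠ 0) :
    vv S n (z * x) / vv S n z
      - (1/(S.card:ℝ)) * ∑ s ∈ S, vv S n (z * (x * s)) / vv S n z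
    = (if z * x = 1 then (1:ℝ) else 0) / vv S n z
      + ((tt n).toReal - 1)
        * ((1/(S.card:ℝ)) * ∑ s ∈ S, vv S n (z * (x * s)) / vv S n z) := by
  have hid := vv_identity S hS n (z * x)
  have hassoc : ∀ s : G, z * x * s = z * (x * s) := fun s => mul_assoc z x s
  simp only [hassoc] at hid
  have hsum : ∑ s ∈ S, vv S n (z * (x * s)) / vv S n z
      = (∑ s ∈ S, vv S n (z * (x * s))) / vv S n z := by
    rw [Finset.sum_div]
  rw [hsum]
  set A := vv S n (z * x)
  set B := ∑ s ∈ S, vv S n (z * (x * s))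
  set I := (if z * x = 1 then (1:ℝ) else 0)
  set tr := (tt n).toReal
  set vz := vv S n z
  have hcard : (S.card : ℝ) ≠ 0 := by
    have := hS.card_pos; positivity
  -- hid : A = I + tr * ((1/card) * B)
  have hid2 : (S.card : ℝ) * A = (S.card : ℝ) * I + tr * B := by
    field_simp at hid
    linarith
  field_simp
  linear_combination hid2

/-! ### flatness of the t = 1 Martin kernels (transient case) -/

lemma flat_one (hS : S.Nonempty)
    (hgen : ∀ g : G, ∃ L : List G, (∀ s ∈ L, s ∈ S) ∧ L.prod = g)
    (hsymm : ∀ s ∈ S, s⁻¹ ∈ S)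
    (hfin : uu S 1 (1:G) ≠ ⊤)
    (HC : ∀ f : G → ℝ, (∀ g, 0 < f g) →
      (∀ g, f g = (1/(S.card : ℝ)) * ∑ s ∈ S, f (g * s)) → ∀ a b : G, f a = f b)
    {ε : ℝ} (hε : 0 < ε) :
    ∃ N : ℕ, ∀ z : G, N ≤ wl S z → ∀ s ∈ S,
      (1 - ε) * (uu S 1 z).toReal ≤ (uu S 1 (z * s)).toReal := by
  classical
  by_contra hcon
  push_neg at hcon
  choose z hz s hsS hviol using hcon
  have hfin' : ∀ y : G, uu S 1 y ≠ ⊤ := uu_one_ne_top S hS hgen hfin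
  set Ur : G → ℝ := fun y => (uu S 1 y).toReal with hUr
  have hUpos : ∀ y : G, 0 < Ur y := fun y =>
    ENNReal.toReal_pos (uu_pos S hgen hsymm one_ne_zero y).ne' (hfin' y)
  set U := Ultrafilter.of (atTop : Filter ℕ) with hU
  have hUle : (U : Filter ℕ) ≤ atTop := Ultrafilter.of_le _
  obtain ⟨σ, hσS, hσU⟩ := ultra_fiber U S s hsS
  set K : ℕ → G → ℝ := fun k x => Ur (z k * x) / Ur (z k) with hK
  -- Harnack bound
  have hKbd : ∀ (k : ℕ) (x : G), K k x ≤ ((S.card : ℝ)) ^ (wl S x) := by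
    intro k x
    rw [hK, div_le_iff₀ (hUpos (z k))]
    have hE := uu_one_le_pow_wl S hS hgen (z k) x
    have := ENNReal.toReal_mono
      (ENNReal.mul_ne_top (by simp) (hfin' (z k))) hE
    rw [ENNReal.toReal_mul, ENNReal.toReal_pow, ENNReal.toReal_natCast] at this
    exact this
  -- real identity for Ur
  have hUid : ∀ y : G, Ur y = (if y = 1 then (1:ℝ) else 0)
      + (1/(S.card : ℝ)) * ∑ s' ∈ S, Ur (y * s') :=
    fun y => uuR_identity_one S hS hgen hfin y
  refine ultralimit_contra S hS hgen HC U K σ ε hε ?_ ?_ ?_ ?_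
  · intro x
    refine ⟨((S.card : ℝ)) ^ (wl S x), Eventually.of_forall fun k => ?_⟩
    exact ⟨div_nonneg ENNReal.toReal_nonneg (hUpos (z k)).le, hKbd k x⟩
  · intro x
    have hev : ∀ᶠ k in (U : Filter ℕ),
        K k x - (1/(S.card : ℝ)) * ∑ s' ∈ S, K k (x * s') = 0 := by
      have hev' : ∀ᶠ k in atTop, wl S x⁻¹ < k := eventually_gt_atTop _
      refine (hev'.filter_mono hUle).mono fun k hk => ?_
      have hne : z k * x ≠ 1 := by
        intro h
        have h2 : z k = x⁻¹ := by
          have := congrArg (fun w => w * x⁻¹) h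
          simpa [mul_assoc] using this
        have hzk := hz k
        rw [h2] at hzk
        omega
      have hid := hUid (z k * x)
      have hassoc : ∀ s' : G, z k * x * s' = z k * (x * s') := fun s' => mul_assoc _ _ _
      simp only [hassoc, if_neg hne, zero_add] at hid
      have hzk := (hUpos (z k)).ne'
      simp only [hK]
      rw [← Finset.sum_div, hid]
      ring
    exact Tendsto.congr' (hev.mono fun k hk => hk.symm) tendsto_const_nhds
  · refine Eventually.of_forall fun k => ?_
    rw [hK]
    simp [div_self (hUpos (z k)).ne']
  · have hσev : ∀ᶠ k in (U : Filter ℕ), s k = σ := hσU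
    refine hσev.mono fun k hk => ?_
    have hv := hviol k
    rw [hk] at hv
    rw [hK, div_le_iff₀ (hUpos (z k))]
    exact hv.le


/-! ### the master flatness lemma -/

open Classical in
lemma master (hS : S.Nonempty)
    (hgen : ∀ g : G, ∃ L : List G, (∀ s ∈ L, s ∈ S) ∧ L.prod = g)
    (hsymm : ∀ s ∈ S, s⁻¹ ∈ S)
    (HC : ∀ f : G → ℝ, (∀ g, 0 < f g) →
      (∀ g, f g = (1/(S.card : ℝ)) * ∑ s ∈ S, f (g * s)) → ∀ a b : G, f a = f b)
    {ε : ℝ} (hε : 0 < ε) (hε1 : ε < 1) :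
    ∃ N M : ℕ, ∀ n, M ≤ n → ∀ z : G, N ≤ wl S z → wl S z ≤ n → ∀ s ∈ S,
      (1 - ε) * vv S n z ≤ vv S n (z * s) := by
  classical
  obtain ⟨N, hN⟩ : ∃ N : ℕ, uu S 1 (1:G) ≠ ⊤ → ∀ z : G, N ≤ wl S z → ∀ s ∈ S,
      (1 - ε/2) * (uu S 1 z).toReal ≤ (uu S 1 (z * s)).toReal := by
    by_cases hfin : uu S 1 (1:G) ≠ ⊤
    · obtain ⟨N, hN⟩ := flat_one S hS hgen hsymm hfin HC (by positivity : (0:ℝ) < ε/2)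
      exact ⟨N, fun _ => hN⟩
    · exact ⟨0, fun h => absurd h hfin⟩
  refine ⟨N, ?_⟩
  by_contra hcon
  push_neg at hcon
  choose nf hge zf hNle hwle sf hsS hviol using hcon
  -- build a strictly monotone subsequence
  let idx : ℕ → ℕ := fun k => Nat.rec 0 (fun _ p => nf p + 1) k
  set nseq : ℕ → ℕ := fun k => nf (idx k) with hnseq
  have hstrict : StrictMono nseq := by
    refine strictMono_nat_of_lt_succ fun k => ?_
    have h1 : idx (k+1) = nf (idx k) + 1 := rfl
    have h2 := hge (idx (k+1))
    calc nseq k = nf (idx k) := rfl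
      _ < nf (idx k) + 1 := Nat.lt_succ_self _
      _ = idx (k+1) := h1.symm
      _ ≤ nf (idx (k+1)) := h2
      _ = nseq (k+1) := rfl
  set Z : ℕ → G := fun k => zf (idx k) with hZ
  set sg : ℕ → G := fun k => sf (idx k) with hsg
  set U := Ultrafilter.of (atTop : Filter ℕ) with hU
  have hUle : (U : Filter ℕ) ≤ atTop := Ultrafilter.of_le _
  obtain ⟨σ, hσS, hσU⟩ := ultra_fiber U S sg (fun k => hsS (idx k))
  have hσev : ∀ᶠ k in (U : Filter ℕ), sg k = σ := by
    rwa [Filter.eventually_iff, Ultrafilter.mem_coe]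
  have hvpos : ∀ (n : ℕ) (y : G), 0 < vv S n y := fun n y => vv_pos S hS hgen hsymm n y
  -- the kernel family, parametrized by a center sequence W
  set Kf : (ℕ → G) → ℕ → G → ℝ :=
    fun W k x => vv S (nseq k) (W k * x) / vv S (nseq k) (W k) with hKf
  have hKnn : ∀ (W : ℕ → G) k x, 0 ≤ Kf W k x :=
    fun W k x => div_nonneg (vv_nonneg S _ _) (hvpos _ _).le
  have hKbd : ∀ (W : ℕ → G) k x, Kf W k x ≤ (2*(S.card:ℝ)) ^ (wl S x) := by
    intro W k x
    simp only [hKf]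
    rw [div_le_iff₀ (hvpos _ _)]
    calc vv S (nseq k) (W k * x)
        ≤ (2*(S.card:ℝ)) ^ (wl S x) * vv S (nseq k) (W k) :=
          vv_le_pow_wl S hS hgen (nseq k) (W k) x
      _ = _ := by ring
  have hKone : ∀ (W : ℕ → G) k, Kf W k 1 = 1 := by
    intro W k
    simp only [hKf, mul_one]
    exact div_self (hvpos _ _).ne'
  have htwoCard : (1:ℝ) ≤ 2*(S.card:ℝ) := by
    have := hS.card_pos
    have h1 : (1:ℝ) ≤ (S.card:ℝ) := by exact_mod_cast this
    linarith
  -- the defect identity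
  have hdef_eq : ∀ (W : ℕ → G) (k : ℕ) (x : G),
      Kf W k x - (1/(S.card:ℝ)) * ∑ s' ∈ S, Kf W k (x * s')
      = (if W k * x = 1 then (1:ℝ) else 0) / vv S (nseq k) (W k)
        + ((tt (nseq k)).toReal - 1)
          * ((1/(S.card:ℝ)) * ∑ s' ∈ S, Kf W k (x * s')) := by
    intro W k x
    have := defect_formula S hS (nseq k) (W k) x (hvpos _ _).ne'
    simpa only [hKf] using this
  -- second term of the defect tends to 0
  have hterm2 : ∀ (W : ℕ → G) (x : G), Tendsto
      (fun k => ((tt (nseq k)).toReal - 1)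
        * ((1/(S.card:ℝ)) * ∑ s' ∈ S, Kf W k (x * s'))) (U : Filter ℕ) (𝓝 0) := by
    intro W x
    have htr : Tendsto (fun k => (tt (nseq k)).toReal - 1) atTop (𝓝 0) := by
      have h1 := tt_toReal_tendsto.comp hstrict.tendsto_atTop
      have h2 := h1.sub_const 1
      simpa using h2
    have hBq : ∀ k, |(1/(S.card:ℝ)) * ∑ s' ∈ S, Kf W k (x * s')|
        ≤ (2*(S.card:ℝ)) ^ (wl S x + 1) := by
      intro k
      have hnn : 0 ≤ (1/(S.card:ℝ)) * ∑ s' ∈ S, Kf W k (x * s') := by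
        apply mul_nonneg (by positivity)
        exact Finset.sum_nonneg fun s' _ => hKnn W k (x * s')
      rw [abs_of_nonneg hnn]
      have hcard : (0:ℝ) < (S.card:ℝ) := by
        have := hS.card_pos; positivity
      have hsum : ∑ s' ∈ S, Kf W k (x * s') ≤ (S.card:ℝ) * (2*(S.card:ℝ)) ^ (wl S x + 1) := by
        calc ∑ s' ∈ S, Kf W k (x * s')
            ≤ ∑ s' ∈ S, (2*(S.card:ℝ)) ^ (wl S x + 1) := by
              refine Finset.sum_le_sum fun s' hs' => ?_
              refine le_trans (hKbd W k (x * s')) ?_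
              exact pow_le_pow_right₀ htwoCard (wl_mul_le S hgen hs')
          _ = (S.card:ℝ) * (2*(S.card:ℝ)) ^ (wl S x + 1) := by
              rw [Finset.sum_const, nsmul_eq_mul]
      calc (1/(S.card:ℝ)) * ∑ s' ∈ S, Kf W k (x * s')
          ≤ (1/(S.card:ℝ)) * ((S.card:ℝ) * (2*(S.card:ℝ)) ^ (wl S x + 1)) := by
            exact mul_le_mul_of_nonneg_left hsum (by positivity)
        _ = (2*(S.card:ℝ)) ^ (wl S x + 1) := by field_simp
    refine squeeze_zero_norm
      (a := fun k => |(tt (nseq k)).toReal - 1| * (2*(S.card:ℝ)) ^ (wl S x + 1)) ?_ ?_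
    · intro k
      rw [Real.norm_eq_abs, abs_mul]
      exact mul_le_mul_of_nonneg_left (hBq k) (abs_nonneg _)
    · have h3 : Tendsto (fun k => |(tt (nseq k)).toReal - 1|
          * (2*(S.card:ℝ)) ^ (wl S x + 1)) atTop (𝓝 (|(0:ℝ)| * (2*(S.card:ℝ)) ^ (wl S x + 1))) :=
        (htr.abs).mul_const _
      simp only [abs_zero, zero_mul] at h3
      exact h3.mono_left hUle
  -- K at sigma is eventually small
  have hsigU : ∀ (W : ℕ → G), (∀ᶠ k in (U : Filter ℕ), W k = Z k) →
      ∀ᶠ k in (U : Filter ℕ), Kf W k σ ≤ 1 - ε := by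
    intro W hW
    filter_upwards [hσev, hW] with k hk hkW
    have hv := hviol (idx k)
    rw [show sf (idx k) = σ from hk] at hv
    simp only [hKf, hkW]
    rw [div_le_iff₀ (hvpos _ _)]
    exact hv.le
  -- now the case analysis
  by_cases hbdd : ∃ m : ℕ, {k | wl S (Z k) ≤ m} ∈ U
  · -- the centers stay bounded: fix the center
    obtain ⟨m, hm⟩ := hbdd
    have hZfin : {k | Z k ∈ (Bset_finite S m).toFinset} ∈ U := by
      refine Filter.mem_of_superset hm ?_
      intro k hk
      simp only [Set.mem_setOf_eq, Set.Finite.mem_toFinset]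
      exact (mem_Bset_iff S hgen m (Z k)).mpr hk
    obtain ⟨z₀, _, hz₀U⟩ := ultra_fiber_aux U Z (Bset_finite S m).toFinset hZfin
    have hz₀ev : ∀ᶠ k in (U : Filter ℕ), Z k = z₀ := by
      rwa [Filter.eventually_iff, Ultrafilter.mem_coe]
    have hz₀N : N ≤ wl S z₀ := by
      obtain ⟨k, hk⟩ := Ultrafilter.nonempty_of_mem hz₀U
      have := hNle (idx k)
      rwa [show zf (idx k) = z₀ from hk] at this
    by_cases hfin : uu S 1 (1:G) ≠ ⊤
    · -- transient case: use flatness of the t = 1 kernel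
      have hfin' : ∀ y, uu S 1 y ≠ ⊤ := uu_one_ne_top S hS hgen hfin
      have hUrpos : ∀ y : G, (0:ℝ) < (uu S 1 y).toReal := fun y =>
        ENNReal.toReal_pos (uu_pos S hgen hsymm one_ne_zero y).ne' (hfin' y)
      have hT1 : Tendsto (fun k => vv S (nseq k) (z₀ * σ)) atTop
          (𝓝 ((uu S 1 (z₀ * σ)).toReal)) := vv_tendsto_Ur S (hfin' _) nseq hstrict
      have hT2 : Tendsto (fun k => vv S (nseq k) z₀) atTop
          (𝓝 ((uu S 1 z₀).toReal)) := vv_tendsto_Ur S (hfin' _) nseq hstrict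
      have hTq : Tendsto (fun k => vv S (nseq k) (z₀ * σ) / vv S (nseq k) z₀)
          (U : Filter ℕ) (𝓝 ((uu S 1 (z₀ * σ)).toReal / (uu S 1 z₀).toReal)) :=
        (hT1.div hT2 (hUrpos z₀).ne').mono_left hUle
      have hle : (uu S 1 (z₀ * σ)).toReal / (uu S 1 z₀).toReal ≤ 1 - ε := by
        refine le_of_tendsto hTq ?_
        filter_upwards [hσev, hz₀ev] with k hk1 hk2
        have hv := hviol (idx k)
        rw [show sf (idx k) = σ from hk1, show zf (idx k) = z₀ from hk2] at hv
        rw [div_le_iff₀ (hvpos _ _)]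
        exact hv.le
      have hflat := hN hfin z₀ hz₀N σ hσS
      rw [div_le_iff₀ (hUrpos z₀)] at hle
      nlinarith [hUrpos z₀, hUrpos (z₀ * σ)]
    · -- recurrent case: the denominators blow up, limit kernel is harmonic
      push_neg at hfin
      have htopz : uu S 1 z₀ = ⊤ := uu_one_eq_top S hS hgen hsymm hfin z₀
      have hvtop : Tendsto (fun k => vv S (nseq k) z₀) atTop atTop :=
        vv_tendsto_atTop S hS htopz nseq hstrict
      set W : ℕ → G := fun _ => z₀ with hW
      refine ultralimit_contra S hS hgen HC U (Kf W) σ ε hε ?_ ?_ ?_ ?_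
      · intro x
        exact ⟨(2*(S.card:ℝ)) ^ (wl S x),
          Eventually.of_forall fun k => ⟨hKnn W k x, hKbd W k x⟩⟩
      · intro x
        have hind : Tendsto (fun k => (if z₀ * x = 1 then (1:ℝ) else 0) / vv S (nseq k) z₀)
            (U : Filter ℕ) (𝓝 0) := by
          by_cases hcase : z₀ * x = 1
          · simp only [hcase, if_pos]
            have h4 : Tendsto (fun k => vv S (nseq k) z₀)⁻¹ atTop (𝓝 0) :=
              hvtop.inv_tendsto_atTop
            have h5 : Tendsto (fun k => 1 / vv S (nseq k) z₀) atTop (𝓝 0) := by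
              simpa [one_div, Pi.inv_def] using h4
            exact h5.mono_left hUle
          · have heq : (fun k => (if z₀ * x = 1 then (1:ℝ) else 0) / vv S (nseq k) z₀)
                = fun _ => (0:ℝ) := by
              funext k; rw [if_neg hcase, zero_div]
            rw [heq]
            exact tendsto_const_nhds
        have := hind.add (hterm2 W x)
        rw [add_zero] at this
        refine Tendsto.congr' ?_ this
        exact Eventually.of_forall fun k => (hdef_eq W k x).symm
      · exact Eventually.of_forall fun k => hKone W k
      · refine hsigU W ?_
        filter_upwards [hz₀ev] with k hk
        rw [hW, hk]
  · -- the centers escape to infinity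
    push_neg at hbdd
    have hfar : ∀ m : ℕ, {k | m < wl S (Z k)} ∈ U := by
      intro m
      have h1 := (Ultrafilter.compl_mem_iff_notMem).mpr (hbdd m)
      have h2 : {k | wl S (Z k) ≤ m}ᶜ = {k | m < wl S (Z k)} := by
        ext k; simp [not_le]
      rwa [h2] at h1
    refine ultralimit_contra S hS hgen HC U (Kf Z) σ ε hε ?_ ?_ ?_ ?_
    · intro x
      exact ⟨(2*(S.card:ℝ)) ^ (wl S x),
        Eventually.of_forall fun k => ⟨hKnn Z k x, hKbd Z k x⟩⟩
    · intro x
      have hindev : ∀ᶠ k in (U : Filter ℕ),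
          (if Z k * x = 1 then (1:ℝ) else 0) / vv S (nseq k) (Z k) = 0 := by
        have h1 : {k | wl S x⁻¹ < wl S (Z k)} ∈ U := hfar (wl S x⁻¹)
        have h1ev : ∀ᶠ k in (U : Filter ℕ), wl S x⁻¹ < wl S (Z k) := by
          rwa [Filter.eventually_iff, Ultrafilter.mem_coe]
        refine h1ev.mono fun k hk => ?_
        have hne : Z k * x ≠ 1 := by
          intro h
          have h2 : Z k = x⁻¹ := by
            have := congrArg (fun w => w * x⁻¹) h
            simpa [mul_assoc] using this
          rw [h2] at hk
          omega
        rw [if_neg hne, zero_div]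
      have hind : Tendsto (fun k => (if Z k * x = 1 then (1:ℝ) else 0) / vv S (nseq k) (Z k))
          (U : Filter ℕ) (𝓝 0) :=
        Tendsto.congr' (hindev.mono fun k hk => hk.symm) tendsto_const_nhds
      have := hind.add (hterm2 Z x)
      rw [add_zero] at this
      refine Tendsto.congr' ?_ this
      exact Eventually.of_forall fun k => (hdef_eq Z k x).symm
    · exact Eventually.of_forall fun k => hKone Z k
    · exact hsigU Z (Eventually.of_forall fun _ => rfl)


/-! ### the chain lower bound -/

lemma chain_bound (hS : S.Nonempty)
    (hgen : ∀ g : G, ∃ L : List G, (∀ s ∈ L, s ∈ S) ∧ L.prod = g)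
    (hsymm : ∀ s ∈ S, s⁻¹ ∈ S)
    {ε : ℝ} (hε : 0 < ε) (hε1 : ε < 1) {N M : ℕ}
    (hmaster : ∀ n, M ≤ n → ∀ z : G, N ≤ wl S z → wl S z ≤ n → ∀ s ∈ S,
      (1 - ε) * vv S n z ≤ vv S n (z * s))
    {n : ℕ} (hMn : M ≤ n) :
    ∀ w : G, wl S w ≤ n →
      (1/(2*(S.card:ℝ)))^N * (1-ε)^n ≤ vv S n w := by
  have hdpos : (0:ℝ) < 1/(2*(S.card:ℝ)) := by
    have := hS.card_pos; positivity
  have hdle1 : 1/(2*(S.card:ℝ)) ≤ 1 := by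
    have h1 : (1:ℝ) ≤ (S.card:ℝ) := by exact_mod_cast hS.card_pos
    rw [div_le_one (by linarith)]
    linarith
  have hεle1 : (1:ℝ) - ε ≤ 1 := by linarith
  have hεpos : (0:ℝ) < 1 - ε := by linarith
  have aux : ∀ ℓ : ℕ, ℓ ≤ n → ∀ w : G, wl S w = ℓ →
      (1/(2*(S.card:ℝ)))^(min ℓ N) * (1-ε)^ℓ ≤ vv S n w := by
    intro ℓ
    induction ℓ with
    | zero =>
      intro _ w hw
      have hw1 : w = 1 := wl_eq_zero S hgen hw
      rw [hw1]
      simpa using vv_one_ge S hS n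
    | succ ℓ ih =>
      intro hln w hw
      obtain ⟨y, s, hsS', rfl, hy⟩ := wl_decomp S hgen hw
      have ihy := ih (by omega) y hy
      by_cases hcase : N ≤ ℓ
      · have hm := hmaster n hMn y (by omega) (by omega) s hsS'
        calc (1/(2*(S.card:ℝ)))^(min (ℓ+1) N) * (1-ε)^(ℓ+1)
            = (1-ε) * ((1/(2*(S.card:ℝ)))^(min ℓ N) * (1-ε)^ℓ) := by
              rw [min_eq_right hcase, min_eq_right (by omega)]
              ring
          _ ≤ (1-ε) * vv S n y := mul_le_mul_of_nonneg_left ihy hεpos.le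
          _ ≤ vv S n (y * s) := hm
      · push_neg at hcase
        have hh := vv_harnack_lower S hS hsymm n y hsS'
        have hprod_nn : (0:ℝ) ≤ (1/(2*(S.card:ℝ)))^ℓ * (1-ε)^ℓ := by positivity
        calc (1/(2*(S.card:ℝ)))^(min (ℓ+1) N) * (1-ε)^(ℓ+1)
            = ((1/(2*(S.card:ℝ))) * ((1/(2*(S.card:ℝ)))^ℓ * (1-ε)^ℓ)) * (1-ε) := by
              rw [min_eq_left (by omega)]
              ring
          _ ≤ ((1/(2*(S.card:ℝ))) * ((1/(2*(S.card:ℝ)))^ℓ * (1-ε)^ℓ)) * 1 := by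
              refine mul_le_mul_of_nonneg_left hεle1 ?_
              positivity
          _ = (1/(2*(S.card:ℝ))) * ((1/(2*(S.card:ℝ)))^(min ℓ N) * (1-ε)^ℓ) := by
              rw [min_eq_left (by omega)]
              ring
          _ ≤ (1/(2*(S.card:ℝ))) * vv S n y := mul_le_mul_of_nonneg_left ihy hdpos.le
          _ ≤ vv S n (y * s) := hh
  intro w hwn
  have h1 := aux (wl S w) hwn w rfl
  refine le_trans ?_ h1
  have h2 : (1/(2*(S.card:ℝ)))^N ≤ (1/(2*(S.card:ℝ)))^(min (wl S w) N) :=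
    pow_le_pow_of_le_one hdpos.le hdle1 (min_le_right _ _)
  have h3 : (1-ε)^n ≤ (1-ε)^(wl S w) :=
    pow_le_pow_of_le_one hεpos.le hεle1 hwn
  exact mul_le_mul h2 h3 (by positivity) (by positivity)

end ExpHarm

open ExpHarm Filter in
/-- Every group of exponential word growth (with respect to a finite symmetric
generating set `S`) supports a non-constant positive harmonic function. Here the
ball `B(r)` is the set of products of at most `r` elements of `S`, a function is
harmonic if `f(g) = (1/|S|) ∑_{s ∈ S} f(gs)`, and exponential growth means
`|B(r)| ≥ c^r` for some `c > 1` and all `r`. -/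
theorem exponential_growth_supports_positive_harmonic
    {G : Type*} [Group G] (S : Finset G)
    (hsymm : ∀ s ∈ S, s⁻¹ ∈ S)
    (hgen : ∀ g : G, ∃ L : List G, (∀ s ∈ L, s ∈ S) ∧ L.prod = g)
    (c : ℝ) (hc : 1 < c)
    (hgrowth : ∀ r : ℕ,
      c ^ r ≤ (({g : G | ∃ L : List G, L.length ≤ r ∧ (∀ s ∈ L, s ∈ S) ∧ L.prod = g}).ncard : ℝ)) :
    ∃ f : G → ℝ, (∀ g : G, 0 < f g) ∧
      (∀ g : G, f g = (1 / (S.card : ℝ)) * ∑ s ∈ S, f (g * s)) ∧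
      ∃ a b : G, f a ≠ f b := by
  classical
  -- S is nonempty
  rcases S.eq_empty_or_nonempty with rfl | hS
  · exfalso
    have h1 := hgrowth 1
    have hset : {g : G | ∃ L : List G, L.length ≤ 1 ∧ (∀ s ∈ L, s ∈ (∅ : Finset G)) ∧ L.prod = g}
        = {(1:G)} := by
      ext g
      constructor
      · rintro ⟨L, hlen, hL, hp⟩
        cases L with
        | nil => simp [← hp]
        | cons a M => exact absurd (hL a (by simp)) (by simp)
      · rintro rfl
        exact ⟨[], by simp, by simp, by simp⟩
    rw [hset, Set.ncard_singleton] at h1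
    simp only [pow_one, Nat.cast_one] at h1
    linarith
  by_contra hcon
  push_neg at hcon
  have HC : ∀ f : G → ℝ, (∀ g, 0 < f g) →
      (∀ g, f g = (1/(S.card : ℝ)) * ∑ s ∈ S, f (g * s)) → ∀ a b : G, f a = f b := hcon
  -- choose epsilon
  set ε : ℝ := (c - 1)/(4*c) with hεdef
  have hε : 0 < ε := by
    rw [hεdef]
    apply div_pos <;> linarith
  have hε1 : ε < 1 := by
    rw [hεdef, div_lt_one (by linarith)]
    linarith
  set θ : ℝ := c * (1-ε)^2 with hθdef
  have hθ : 1 < θ := by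
    have h1 : (1-ε)^2 ≥ 1 - 2*ε := by nlinarith [sq_nonneg ε]
    have h2 : θ ≥ c * (1 - 2*ε) := by
      rw [hθdef]
      exact mul_le_mul_of_nonneg_left h1 (by linarith)
    have h3 : c * (1 - 2*ε) = (c+1)/2 := by
      rw [hεdef]
      field_simp
      ring
    rw [h3] at h2
    linarith
  obtain ⟨N, M, hmaster⟩ := master S hS hgen hsymm HC hε hε1
  -- the little-o step
  set A : ℝ := ((1/(2*(S.card:ℝ)))^N)^2 with hAdef
  have hApos : 0 < A := by
    have := hS.card_pos
    rw [hAdef]; positivity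
  have hlo : (fun n : ℕ => ((n:ℝ))^2) =o[atTop] (fun n : ℕ => θ^n) :=
    isLittleO_pow_const_const_pow_of_one_lt 2 hθ
  have hev : ∀ᶠ n : ℕ in atTop, ‖((n:ℝ))^2‖ ≤ (A/8) * ‖θ^n‖ :=
    hlo.def (by positivity)
  obtain ⟨n, hn2, hMn, hnbd⟩ :
      ∃ n : ℕ, 2 ≤ n ∧ M ≤ n ∧ ‖((n:ℝ))^2‖ ≤ (A/8) * ‖θ^n‖ := by
    obtain ⟨n, hn⟩ := ((eventually_ge_atTop 2).and ((eventually_ge_atTop M).and hev)).exists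
    exact ⟨n, hn.1, hn.2.1, hn.2.2⟩
  -- upper bound for (n+2)^2
  have hθpow_pos : (0:ℝ) < θ^n := by positivity
  have hnormθ : ‖θ^n‖ = θ^n := by
    rw [Real.norm_eq_abs, abs_of_pos hθpow_pos]
  have hn4 : ((n:ℝ)+2)^2 ≤ 4*((n:ℝ))^2 := by
    have h2n : ((n:ℝ)) ≥ 2 := by exact_mod_cast hn2
    nlinarith
  have hupper : ((n:ℝ)+2)^2 < A * θ^n := by
    rw [Real.norm_eq_abs, abs_of_nonneg (by positivity : (0:ℝ) ≤ ((n:ℝ))^2), hnormθ] at hnbd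
    calc ((n:ℝ)+2)^2 ≤ 4*((n:ℝ))^2 := hn4
      _ ≤ 4*((A/8) * θ^n) := by linarith
      _ = (A/2) * θ^n := by ring
      _ < A * θ^n := by
          have : (0:ℝ) < (A/2) * θ^n := by positivity
          nlinarith
  -- the counting
  set F : Finset G := (Bset_finite S n).toFinset with hFdef
  have hgrow := hgrowth n
  have hncard : ((Bset S n).ncard : ℝ) = (F.card : ℝ) := by
    rw [Set.ncard_eq_toFinset_card (Bset S n) (Bset_finite S n)]
  have hgrowF : c ^ n ≤ (F.card : ℝ) := by
    rw [← hncard]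
    exact hgrow
  set κ : ℝ := (1/(2*(S.card:ℝ)))^N * (1-ε)^n with hκdef
  have hκpos : 0 < κ := by
    have := hS.card_pos
    have hεpos : (0:ℝ) < 1 - ε := by linarith
    rw [hκdef]; positivity
  have hterm : ∀ w ∈ F, κ * κ ≤ vv S n w * vv S n w⁻¹ := by
    intro w hw
    have hwB : w ∈ Bset S n := (Set.Finite.mem_toFinset _).mp hw
    have hwn : wl S w ≤ n := (mem_Bset_iff S hgen n w).mp hwB
    have hwn' : wl S w⁻¹ ≤ n := by
      rw [wl_inv_eq S hgen hsymm]
      exact hwn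
    have h1 := chain_bound S hS hgen hsymm hε hε1 hmaster hMn w hwn
    have h2 := chain_bound S hS hgen hsymm hε hε1 hmaster hMn w⁻¹ hwn'
    exact mul_le_mul h1 h2 hκpos.le (vv_nonneg S n w)
  have hsum_lower : (F.card : ℝ) * (κ * κ) ≤ ∑ w ∈ F, vv S n w * vv S n w⁻¹ := by
    have := Finset.card_nsmul_le_sum F (fun w => vv S n w * vv S n w⁻¹) (κ * κ) hterm
    simpa [nsmul_eq_mul] using this
  have hsum_upper := sum_vv_le S hS n F
  -- combine
  have hfinal : A * θ^n ≤ ((n:ℝ)+2)^2 := by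
    have hAθ : A * θ^n = c^n * (κ * κ) := by
      have hpow : ((1-ε)^2)^n = ((1-ε)^n)^2 := by
        rw [← pow_mul, ← pow_mul, Nat.mul_comm]
      rw [hAdef, hθdef, hκdef, mul_pow, hpow]
      ring
    rw [hAθ]
    calc c^n * (κ * κ) ≤ (F.card : ℝ) * (κ * κ) := by
          refine mul_le_mul_of_nonneg_right hgrowF ?_
          positivity
      _ ≤ ∑ w ∈ F, vv S n w * vv S n w⁻¹ := hsum_lower
      _ ≤ ((n:ℝ)+2)^2 := hsum_upper
  linarith
end

section
/- There exists a non-constant μ-harmonic function f : G → ℝ with f(g) > 0 for all g ∈ G if and only if there exist a, b ∈ G such that ε(S;a,b) does not tend to 0 as S → G; that is, if and only if there exist a, b ∈ G and ε > 0 such that for every finite subset F ⊆ G there is a finite set S with F ∪ {a,b} ⊆ S ⊆ G and ε(S;a,b) ≥ ε. -/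
set_option linter.unusedSectionVars false


open Classical in
/-- The probability that the `μ`-random walk started at `a` first exits the set `S`
at the point `x`, written as a sum over all step-lists `L` whose proper-prefix
positions stay in `S` and whose final position is `x`. -/
noncomputable def exitProb {G : Type*} [Group G] (μ : G → ℝ) (S : Set G) (a x : G) : ℝ :=
  ∑' L : List G,
    if (∀ k < L.length, a * (L.take k).prod ∈ S) ∧ a * L.prod = x then (L.map μ).prod else 0

/-- The (outer) boundary `∂S` of a set `S`: points outside `S` reachable in one
`μ`-step from `S`. -/
def bdry {G : Type*} [Group G] (μ : G → ℝ) (S : Set G) : Set G :=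
  {x | x ∉ S ∧ ∃ y ∈ S, 0 < μ (y⁻¹ * x)}

/-- `ε(S; a, b) = max { |μ_S(a,x) − μ_S(b,x)| / μ_S(a,x) : x ∈ ∂S, μ_S(a,x) > 0 }`,
interpreted as `0` if no such `x` exists (since `sSup ∅ = 0` over `ℝ`). -/
noncomputable def epsRatio {G : Type*} [Group G] (μ : G → ℝ) (S : Set G) (a b : G) : ℝ :=
  sSup {r : ℝ | ∃ x ∈ bdry μ S, 0 < exitProb μ S a x ∧
    r = |exitProb μ S a x - exitProb μ S b x| / exitProb μ S a x}

/-- `f` is `μ`-harmonic: `f g = ∑_s μ(s) f(g s)` for every `g`. -/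
def IsMuHarmonic {G : Type*} [Group G] (μ : G → ℝ) (f : G → ℝ) : Prop :=
  ∀ g : G, f g = ∑ᶠ s : G, μ s * f (g * s)

/-- Directed distance: the least `k` such that `g = a · s₁ ⋯ s_k` with all `sᵢ ∈ supp μ`. -/
noncomputable def dDist {G : Type*} [Group G] (μ : G → ℝ) (a g : G) : ℕ :=
  sInf {k : ℕ | ∃ L : List G, L.length = k ∧ (∀ s ∈ L, 0 < μ s) ∧ a * L.prod = g}

/-- The directed ball `B(a, r)`. -/
def dBall {G : Type*} [Group G] (μ : G → ℝ) (a : G) (r : ℕ) : Set G :=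
  {g | dDist μ a g ≤ r}


open scoped ENNReal
open Classical

namespace RWaux

variable {G : Type*} [Group G]

noncomputable def nu (μ : G → ℝ) : G → ℝ≥0∞ := fun s => ENNReal.ofReal (μ s)

noncomputable def wt (μ : G → ℝ) (L : List G) : ℝ≥0∞ := (L.map (nu μ)).prod

def Stays (S : Set G) (a : G) (L : List G) : Prop :=
  ∀ k < L.length, a * (L.take k).prod ∈ S

open Classical in
noncomputable def EP (μ : G → ℝ) (S : Set G) (a x : G) : ℝ≥0∞ :=
  ∑' L : List G, if Stays S a L ∧ a * L.prod = x then wt μ L else 0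

variable {μ : G → ℝ} {S : Set G} {a x : G}

@[simp] lemma wt_nil : wt μ ([] : List G) = 1 := rfl

lemma wt_cons (s : G) (L : List G) : wt μ (s :: L) = nu μ s * wt μ L := by
  simp [wt]

lemma wt_append (L M : List G) : wt μ (L ++ M) = wt μ L * wt μ M := by
  simp [wt]

lemma wt_ne_top (L : List G) : wt μ L ≠ ⊤ := by
  induction L with
  | nil => simp
  | cons s L ih =>
      rw [wt_cons]
      exact ENNReal.mul_ne_top ENNReal.ofReal_ne_top ih

lemma toReal_wt (hpos : ∀ s : G, 0 ≤ μ s) (L : List G) :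
    (wt μ L).toReal = (L.map μ).prod := by
  induction L with
  | nil => simp
  | cons s L ih =>
      rw [wt_cons, ENNReal.toReal_mul, ih]
      simp [nu, ENNReal.toReal_ofReal (hpos s)]

lemma exitProb_eq_toReal (hpos : ∀ s : G, 0 ≤ μ s) :
    exitProb μ S a x = (EP μ S a x).toReal := by
  rw [EP, ENNReal.tsum_toReal_eq]
  · rw [exitProb]
    refine tsum_congr fun L => ?_
    by_cases h : Stays S a L ∧ a * L.prod = x
    · rw [if_pos h, if_pos (by exact ⟨h.1, h.2⟩), toReal_wt hpos]
    · rw [if_neg h, if_neg (by exact fun hc => h ⟨hc.1, hc.2⟩)]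
      simp
  · intro L
    split
    · exact wt_ne_top L
    · simp

end RWaux
namespace RWaux

variable {G : Type*} [Group G] {μ : G → ℝ} {S : Set G} {a x : G}

noncomputable def sLists (t : Finset G) : ℕ → Finset (List G)
  | 0 => {([] : List G)}
  | (n + 1) => (t ×ˢ sLists t n).image fun p => p.1 :: p.2

lemma mem_sLists {t : Finset G} : ∀ {n : ℕ} {L : List G},
    L ∈ sLists t n ↔ L.length = n ∧ ∀ s ∈ L, s ∈ t := by
  intro n
  induction n with
  | zero =>
      intro L
      simp only [sLists, Finset.mem_singleton, List.length_eq_zero_iff]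
      constructor
      · rintro rfl; exact ⟨rfl, by simp⟩
      · rintro ⟨rfl, _⟩; rfl
  | succ n ih =>
      intro L
      constructor
      · intro hL
        simp only [sLists, Finset.mem_image, Finset.mem_product] at hL
        obtain ⟨⟨s, M⟩, ⟨hs, hM⟩, rfl⟩ := hL
        obtain ⟨hlen, hmem⟩ := ih.mp hM
        refine ⟨by simp [hlen], ?_⟩
        intro u hu
        rcases List.mem_cons.mp hu with h | h
        · exact h ▸ hs
        · exact hmem u h
      · rintro ⟨hlen, hmem⟩
        cases L with
        | nil => simp at hlen
        | cons s M =>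
            simp only [sLists, Finset.mem_image, Finset.mem_product]
            refine ⟨(s, M), ⟨hmem s (by simp), ih.mpr ⟨by simpa using hlen, fun u hu => hmem u (List.mem_cons_of_mem _ hu)⟩⟩, rfl⟩

lemma sum_nu_eq_one (hpos : ∀ s : G, 0 ≤ μ s) (hfin : (Function.support μ).Finite)
    (hsum : ∑ᶠ s : G, μ s = 1) :
    ∑ s ∈ hfin.toFinset, nu μ s = 1 := by
  have h1 : ∑ᶠ s : G, μ s = ∑ s ∈ hfin.toFinset, μ s :=
    finsum_eq_sum_of_support_subset _ (by simp)
  rw [show (1 : ℝ≥0∞) = ENNReal.ofReal 1 by simp, ← hsum, h1,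
    ENNReal.ofReal_sum_of_nonneg (fun s _ => hpos s)]
  rfl

lemma sum_wt_sLists (hpos : ∀ s : G, 0 ≤ μ s) (hfin : (Function.support μ).Finite)
    (hsum : ∑ᶠ s : G, μ s = 1) (n : ℕ) :
    ∑ L ∈ sLists hfin.toFinset n, wt μ L = 1 := by
  induction n with
  | zero => simp [sLists]
  | succ n ih =>
      rw [sLists, Finset.sum_image (fun p hp q hq h => by
        simpa [Prod.ext_iff] using h)]
      rw [Finset.sum_product]
      simp only [wt_cons]
      rw [← Finset.sum_mul_sum]
      rw [ih, sum_nu_eq_one hpos hfin hsum, one_mul]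

lemma wt_eq_zero_of_not_mem (hL : ∃ s ∈ L, s ∉ Function.support μ) : wt μ L = 0 := by
  obtain ⟨s, hs, hsupp⟩ := hL
  have : nu μ s = 0 := by
    simp only [Function.mem_support, not_not] at hsupp
    simp [nu, hsupp]
  exact List.prod_eq_zero (by exact List.mem_map.mpr ⟨s, hs, this⟩)

/-- Admissible exit paths are prefix-free. -/
lemma stays_prefix_free {L L' : List G} (hL : Stays S a L ∧ a * L.prod ∉ S)
    (hL' : Stays S a L' ∧ a * L'.prod ∉ S) (hpre : L <+: L') : L = L' := by
  by_contra hne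
  obtain ⟨R, rfl⟩ := hpre
  have hRne : R ≠ [] := fun h => hne (by simp [h])
  have hlt : L.length < (L ++ R).length := by
    simp [List.length_append]
    exact List.length_pos_iff.mpr hRne
  have := hL'.1 L.length hlt
  rw [List.take_left] at this
  exact hL.2 this

/-- Master bound: any finite set of admissible exit paths has total weight at most 1. -/
lemma sum_wt_le_one (hpos : ∀ s : G, 0 ≤ μ s) (hfin : (Function.support μ).Finite)
    (hsum : ∑ᶠ s : G, μ s = 1) (T : Finset (List G))
    (hT : ∀ L ∈ T, Stays S a L ∧ a * L.prod ∉ S) :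
    ∑ L ∈ T, wt μ L ≤ 1 := by
  classical
  set t := hfin.toFinset with ht
  set T' := T.filter (fun L => ∀ s ∈ L, s ∈ t) with hT'
  have hsub : ∑ L ∈ T, wt μ L = ∑ L ∈ T', wt μ L := by
    rw [hT', Finset.sum_filter_of_ne]
    intro L _ hw
    intro s hs
    by_contra hst
    exact hw (wt_eq_zero_of_not_mem ⟨s, hs, by simpa [t] using hst⟩)
  rw [hsub]
  set N := T'.sup List.length with hN
  have key : ∀ L ∈ T', wt μ L = ∑ M ∈ sLists t (N - L.length), wt μ (L ++ M) := by
    intro L hL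
    simp only [wt_append]
    rw [← Finset.mul_sum, sum_wt_sLists hpos hfin hsum, mul_one]
  rw [Finset.sum_congr rfl key, ← Finset.sum_sigma T' (fun L => sLists t (N - L.length)) (fun p => wt μ (p.1 ++ p.2))]
  have hinj : ∀ p ∈ T'.sigma (fun L => sLists t (N - L.length)),
      ∀ q ∈ T'.sigma (fun L => sLists t (N - L.length)),
      (fun (r : Σ _ : List G, List G) => r.1 ++ r.2) p = (fun r => r.1 ++ r.2) q → p = q := by
    rintro ⟨L, M⟩ hp ⟨L', M'⟩ hq h
    simp only [Finset.mem_sigma] at hp hq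
    simp only at h
    have hLL' : L = L' := by
      have h1 : L <+: L' ++ M' := h ▸ ⟨M, rfl⟩
      have h2 : L' <+: L' ++ M' := ⟨M', rfl⟩
      rcases List.prefix_or_prefix_of_prefix h1 h2 with hc | hc
      · exact stays_prefix_free (hT _ (Finset.mem_of_mem_filter _ hp.1))
          (hT _ (Finset.mem_of_mem_filter _ hq.1)) hc
      · exact (stays_prefix_free (hT _ (Finset.mem_of_mem_filter _ hq.1))
          (hT _ (Finset.mem_of_mem_filter _ hp.1)) hc).symm
    subst hLL'
    have : M = M' := by
      have := h
      simpa using this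
    simp [this]
  rw [← Finset.sum_image hinj]
  refine le_trans (Finset.sum_le_sum_of_subset ?_) (le_of_eq (sum_wt_sLists hpos hfin hsum N))
  intro K hK
  simp only [Finset.mem_image] at hK
  obtain ⟨⟨L, M⟩, hp, rfl⟩ := hK
  simp only [Finset.mem_sigma] at hp
  obtain ⟨hLT', hM⟩ := hp
  obtain ⟨hMlen, hMmem⟩ := mem_sLists.mp hM
  have hLlen : L.length ≤ N := Finset.le_sup hLT'
  have hLmem : ∀ s ∈ L, s ∈ t := by
    have := Finset.mem_filter.mp hLT'
    exact this.2
  refine mem_sLists.mpr ⟨?_, ?_⟩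
  · simp [List.length_append, hMlen, Nat.add_sub_cancel' hLlen]
  · intro s hs
    rcases List.mem_append.mp hs with h | h
    · exact hLmem s h
    · exact hMmem s h

end RWaux
namespace RWaux

variable {G : Type*} [Group G] {μ : G → ℝ} {S : Set G} {a x : G}

lemma tsum_ite_le_one (hpos : ∀ s : G, 0 ≤ μ s) (hfin : (Function.support μ).Finite)
    (hsum : ∑ᶠ s : G, μ s = 1) (P : List G → Prop) [DecidablePred P]
    (hP : ∀ L, P L → Stays S a L ∧ a * L.prod ∉ S) :
    ∑' L : List G, (if P L then wt μ L else 0) ≤ 1 := by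
  rw [ENNReal.tsum_eq_iSup_sum]
  refine iSup_le fun T => ?_
  classical
  have : ∑ L ∈ T, (if P L then wt μ L else 0) = ∑ L ∈ T.filter P, wt μ L := by
    rw [Finset.sum_filter]
  rw [this]
  exact sum_wt_le_one hpos hfin hsum _ (fun L hL => hP L (Finset.mem_filter.mp hL).2)

lemma EP_le_one (hpos : ∀ s : G, 0 ≤ μ s) (hfin : (Function.support μ).Finite)
    (hsum : ∑ᶠ s : G, μ s = 1) (hx : x ∉ S) : EP μ S a x ≤ 1 := by
  rw [EP]
  exact tsum_ite_le_one hpos hfin hsum (fun L => Stays S a L ∧ a * L.prod = x)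
    (fun L hL => ⟨hL.1, hL.2 ▸ hx⟩)

lemma EP_ne_top (hpos : ∀ s : G, 0 ≤ μ s) (hfin : (Function.support μ).Finite)
    (hsum : ∑ᶠ s : G, μ s = 1) (hx : x ∉ S) : EP μ S a x ≠ ⊤ :=
  ne_top_of_le_ne_top ENNReal.one_ne_top (EP_le_one hpos hfin hsum hx)

lemma EP_of_not_mem (ha : a ∉ S) : EP μ S a x = if a = x then 1 else 0 := by
  rw [EP, tsum_eq_single ([] : List G)]
  · simp only [Stays, List.length_nil, List.prod_nil, mul_one]
    by_cases h : a = x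
    · rw [if_pos ⟨fun k hk => absurd hk (by omega), h⟩, if_pos h, wt_nil]
    · rw [if_neg (fun hc => h hc.2), if_neg h]
  · intro L hL
    rw [if_neg]
    rintro ⟨hst, -⟩
    have : 0 < L.length := List.length_pos_iff.mpr hL
    have := hst 0 this
    simp only [List.take_zero, List.prod_nil, mul_one] at this
    exact ha this

lemma stays_cons {s : G} {L : List G} :
    (Stays S a (s :: L) ∧ a * (s :: L).prod = x) ↔
      (a ∈ S ∧ Stays S (a * s) L ∧ (a * s) * L.prod = x) := by
  constructor
  · rintro ⟨hst, hend⟩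
    have ha : a ∈ S := by
      have := hst 0 (by simp)
      simpa using this
    refine ⟨ha, fun k hk => ?_, by rw [← hend]; simp [mul_assoc]⟩
    have := hst (k + 1) (by simpa using Nat.succ_lt_succ hk)
    simpa [List.take_succ_cons, mul_assoc] using this
  · rintro ⟨ha, hst, hend⟩
    refine ⟨fun k hk => ?_, by rw [← hend]; simp [mul_assoc]⟩
    cases k with
    | zero => simpa using ha
    | succ k =>
        have := hst k (by simpa using Nat.lt_of_succ_lt_succ hk)
        simpa [List.take_succ_cons, mul_assoc] using this

open Classical in
lemma EP_rec (ha : a ∈ S) (hx : x ∉ S) :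
    EP μ S a x = ∑' s : G, nu μ s * EP μ S (a * s) x := by
  have hinj : Function.Injective (fun p : G × List G => p.1 :: p.2) := by
    rintro ⟨s, L⟩ ⟨s', L'⟩ h
    simpa [Prod.ext_iff] using h
  have hsupp : Function.support
      (fun L : List G => if Stays S a L ∧ a * L.prod = x then wt μ L else 0) ⊆
      Set.range (fun p : G × List G => p.1 :: p.2) := by
    intro L hL
    cases L with
    | nil =>
        exfalso
        apply hL
        show (if Stays S a ([] : List G) ∧ a * ([] : List G).prod = x then wt μ [] else 0) = 0
        rw [if_neg]
        rintro ⟨-, hend⟩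
        simp only [List.prod_nil, mul_one] at hend
        exact hx (hend ▸ ha)
    | cons s M => exact ⟨(s, M), rfl⟩
  calc EP μ S a x = ∑' (p : G × List G),
        (fun (s : G) (L : List G) =>
          if Stays S a (s :: L) ∧ a * (s :: L).prod = x then wt μ (s :: L) else 0) p.1 p.2 := by
        rw [EP, ← Function.Injective.tsum_eq hinj hsupp]
    _ = ∑' (s : G) (L : List G),
        (if Stays S a (s :: L) ∧ a * (s :: L).prod = x then wt μ (s :: L) else 0) :=
        ENNReal.tsum_prod (f := fun (s : G) (L : List G) =>
          if Stays S a (s :: L) ∧ a * (s :: L).prod = x then wt μ (s :: L) else 0)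
    _ = ∑' s : G, nu μ s * EP μ S (a * s) x := ?_
  refine tsum_congr fun s => ?_
  rw [EP, ← ENNReal.tsum_mul_left]
  refine tsum_congr fun L => ?_
  by_cases h : Stays S (a * s) L ∧ (a * s) * L.prod = x
  · rw [if_pos (stays_cons.mpr ⟨ha, h⟩), if_pos h, wt_cons]
  · rw [if_neg (fun hc => h (stays_cons.mp hc).2), if_neg h, mul_zero]

/-- Harnack-type inequality along a path staying in `S`. -/
lemma wt_mul_EP_le (L0 : List G) (h1 : ∀ k ≤ L0.length, a * (L0.take k).prod ∈ S) :
    wt μ L0 * EP μ S (a * L0.prod) x ≤ EP μ S a x := by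
  rw [EP, ← ENNReal.tsum_mul_left]
  calc ∑' L : List G, wt μ L0 *
        (if Stays S (a * L0.prod) L ∧ (a * L0.prod) * L.prod = x then wt μ L else 0)
      ≤ ∑' L : List G,
        (if Stays S a (L0 ++ L) ∧ a * (L0 ++ L).prod = x then wt μ (L0 ++ L) else 0) := by
        refine ENNReal.tsum_le_tsum fun L => ?_
        by_cases h : Stays S (a * L0.prod) L ∧ (a * L0.prod) * L.prod = x
        · rw [if_pos h, if_pos, wt_append]
          constructor
          · intro k hk
            rcases le_or_gt k L0.length with hkle | hkgt
            · rw [List.take_append_of_le_length hkle]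
              exact h1 k hkle
            · obtain ⟨j, rfl⟩ : ∃ j, k = L0.length + j := ⟨k - L0.length, by omega⟩
              rw [List.take_length_add_append, List.prod_append, ← mul_assoc]
              refine h.1 j ?_
              simp only [List.length_append] at hk
              omega
          · rw [List.prod_append, ← mul_assoc]
            exact h.2
        · rw [if_neg h, mul_zero]
          exact zero_le
    _ ≤ EP μ S a x := by
        rw [EP]
        exact ENNReal.tsum_comp_le_tsum_of_injective
          (fun L L' h => by simpa using List.append_cancel_left h) _

end RWaux
namespace RWaux

variable {G : Type*} [Group G] {μ : G → ℝ} {S : Set G} {a x : G}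

lemma exitProb_nonneg (hpos : ∀ s : G, 0 ≤ μ s) : 0 ≤ exitProb μ S a x := by
  rw [exitProb_eq_toReal hpos]; exact ENNReal.toReal_nonneg

lemma exitProb_le_one (hpos : ∀ s : G, 0 ≤ μ s) (hfin : (Function.support μ).Finite)
    (hsum : ∑ᶠ s : G, μ s = 1) (hx : x ∉ S) : exitProb μ S a x ≤ 1 := by
  rw [exitProb_eq_toReal hpos]
  exact le_trans (ENNReal.toReal_mono ENNReal.one_ne_top (EP_le_one hpos hfin hsum hx)) (by simp)

lemma exitProb_of_not_mem (hpos : ∀ s : G, 0 ≤ μ s) (ha : a ∉ S) :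
    exitProb μ S a x = if a = x then 1 else 0 := by
  rw [exitProb_eq_toReal hpos, EP_of_not_mem ha]
  split <;> simp

lemma exitProb_rec (hpos : ∀ s : G, 0 ≤ μ s) (hfin : (Function.support μ).Finite)
    (hsum : ∑ᶠ s : G, μ s = 1) (ha : a ∈ S) (hx : x ∉ S) :
    exitProb μ S a x = ∑ s ∈ hfin.toFinset, μ s * exitProb μ S (a * s) x := by
  rw [exitProb_eq_toReal hpos, EP_rec ha hx,
    tsum_eq_sum (s := hfin.toFinset) (f := fun s => nu μ s * EP μ S (a * s) x)
      (by
        intro s hs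
        have : μ s = 0 := by
          by_contra h
          exact hs (hfin.mem_toFinset.mpr h)
        simp [nu, this]),
    ENNReal.toReal_sum (f := fun s => nu μ s * EP μ S (a * s) x)
      (fun s _ => ENNReal.mul_ne_top (by simp [nu]) (EP_ne_top hpos hfin hsum hx))]
  refine Finset.sum_congr rfl fun s _ => ?_
  rw [ENNReal.toReal_mul, exitProb_eq_toReal hpos]
  simp [nu, ENNReal.toReal_ofReal (hpos s)]

lemma finsum_mu_eq (hfin : (Function.support μ).Finite) (v : G → ℝ) :
    ∑ᶠ s : G, μ s * v s = ∑ s ∈ hfin.toFinset, μ s * v s := by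
  refine finsum_eq_sum_of_support_subset _ ?_
  intro s hs
  have : μ s ≠ 0 := by
    intro h
    apply hs
    simp [h]
  simpa using this

lemma exitProb_rec_finsum (hpos : ∀ s : G, 0 ≤ μ s) (hfin : (Function.support μ).Finite)
    (hsum : ∑ᶠ s : G, μ s = 1) (ha : a ∈ S) (hx : x ∉ S) :
    exitProb μ S a x = ∑ᶠ s : G, μ s * exitProb μ S (a * s) x := by
  rw [finsum_mu_eq hfin, exitProb_rec hpos hfin hsum ha hx]

lemma exitProb_path_le (hpos : ∀ s : G, 0 ≤ μ s) (hfin : (Function.support μ).Finite)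
    (hsum : ∑ᶠ s : G, μ s = 1) (hx : x ∉ S) (L0 : List G)
    (h1 : ∀ k ≤ L0.length, a * (L0.take k).prod ∈ S) :
    (L0.map μ).prod * exitProb μ S (a * L0.prod) x ≤ exitProb μ S a x := by
  rw [exitProb_eq_toReal hpos, exitProb_eq_toReal hpos, ← toReal_wt hpos, ← ENNReal.toReal_mul]
  exact ENNReal.toReal_mono (EP_ne_top hpos hfin hsum hx) (wt_mul_EP_le L0 h1)

lemma summable_exit (hpos : ∀ s : G, 0 ≤ μ s) (hfin : (Function.support μ).Finite)
    (hsum : ∑ᶠ s : G, μ s = 1) (hx : x ∉ S) :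
    Summable (fun L : List G =>
      if (∀ k < L.length, a * (L.take k).prod ∈ S) ∧ a * L.prod = x
        then (L.map μ).prod else 0) := by
  have hs := ENNReal.summable_toReal (f := fun L : List G =>
      if Stays S a L ∧ a * L.prod = x then wt μ L else 0)
      (by
        intro h
        exact EP_ne_top hpos hfin hsum hx (by rw [EP, h]))
  refine hs.congr fun L => ?_
  show (if Stays S a L ∧ a * L.prod = x then wt μ L else 0).toReal = _
  by_cases h : Stays S a L ∧ a * L.prod = x
  · rw [if_pos h, toReal_wt hpos, if_pos (by exact ⟨h.1, h.2⟩)]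
  · rw [if_neg h, if_neg (by exact fun hc => h ⟨hc.1, hc.2⟩)]
    simp

lemma mul_le_one_of_le (hpos : ∀ s : G, 0 ≤ μ s) (hsum : ∑ᶠ s : G, μ s = 1)
    (hfin : (Function.support μ).Finite) (s : G) : μ s ≤ 1 := by
  rw [finsum_eq_sum_of_support_subset _ (by simp : Function.support μ ⊆ ↑hfin.toFinset)] at hsum
  by_cases hs : s ∈ hfin.toFinset
  · rw [← hsum]
    exact Finset.single_le_sum (fun i _ => hpos i) hs
  · have : μ s = 0 := by
      by_contra h
      exact hs (hfin.mem_toFinset.mpr h)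
    simp [this]

lemma bdry_finite (hS : S.Finite) (hfin : (Function.support μ).Finite) :
    (bdry μ S).Finite := by
  refine Set.Finite.subset (Set.Finite.image2 (fun y s => y * s) hS hfin) ?_
  rintro x ⟨hx, y, hy, hμ⟩
  exact ⟨y, hy, y⁻¹ * x, by simp [Function.mem_support]; exact ne_of_gt hμ, by simp⟩

end RWaux
namespace RWaux

variable {G : Type*} [Group G] {μ : G → ℝ} {S : Set G} {a x c : G}

/-- Real weight of a step list. -/
noncomputable def wR (μ : G → ℝ) (L : List G) : ℝ := (L.map μ).prod

@[simp] lemma wR_nil : wR μ ([] : List G) = 1 := rfl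

lemma wR_append (L M : List G) : wR μ (L ++ M) = wR μ L * wR μ M := by simp [wR]

lemma wR_nonneg (hpos : ∀ s : G, 0 ≤ μ s) (L : List G) : 0 ≤ wR μ L := by
  induction L with
  | nil => simp
  | cons s L ih => simpa [wR] using mul_nonneg (hpos s) ih

lemma wR_le_one (hpos : ∀ s : G, 0 ≤ μ s) (hfin : (Function.support μ).Finite)
    (hsum : ∑ᶠ s : G, μ s = 1) (L : List G) : wR μ L ≤ 1 := by
  induction L with
  | nil => simp
  | cons s L ih =>
      simp only [wR, List.map_cons, List.prod_cons]
      exact mul_le_one₀ (mul_le_one_of_le hpos hsum hfin s) (wR_nonneg hpos L) ih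

lemma wR_pos (hpos : ∀ s : G, 0 ≤ μ s) {L : List G} (h : ∀ s ∈ L, μ s ≠ 0) :
    0 < wR μ L := by
  induction L with
  | nil => simp
  | cons s L ih =>
      simp only [wR, List.map_cons, List.prod_cons]
      exact mul_pos (lt_of_le_of_ne (hpos s) (Ne.symm (h s (by simp))))
        (ih fun u hu => h u (List.mem_cons_of_mem _ hu))

open Classical in
/-- Lists of steps of length `n` that keep the walk from `c` inside `S`
(including the final position). -/
noncomputable def stF (t : Finset G) (S : Set G) (c : G) : ℕ → Finset (List G)
  | 0 => if c ∈ S then {([] : List G)} else ∅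
  | (n + 1) => ((stF t S c n ×ˢ t).image fun p => p.1 ++ [p.2]).filter
      (fun L => c * L.prod ∈ S)

open Classical in
/-- Lists of steps of length `n` that keep the walk from `c` inside `S` until
exiting exactly at step `n`. -/
noncomputable def exF (t : Finset G) (S : Set G) (c : G) : ℕ → Finset (List G)
  | 0 => ∅
  | (n + 1) => ((stF t S c n ×ˢ t).image fun p => p.1 ++ [p.2]).filter
      (fun L => c * L.prod ∉ S)

lemma concat_inj : Function.Injective (fun p : List G × G => p.1 ++ [p.2]) := by
  rintro ⟨L, u⟩ ⟨L', u'⟩ h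
  simp only at h
  have hlen : L.length = L'.length := by
    have := congrArg List.length h
    simpa using this
  obtain ⟨h1, h2⟩ := List.append_inj h hlen
  simp_all

lemma mem_stF_iff {t : Finset G} {n : ℕ} {L : List G} :
    L ∈ stF t S c n ↔
      L.length = n ∧ (∀ s ∈ L, s ∈ t) ∧ ∀ k ≤ n, c * (L.take k).prod ∈ S := by
  induction n generalizing L with
  | zero =>
      simp only [stF]
      constructor
      · intro hL
        by_cases hc : c ∈ S
        · rw [if_pos hc, Finset.mem_singleton] at hL
          subst hL
          exact ⟨rfl, by simp, fun k hk => by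
            interval_cases k
            simpa using hc⟩
        · rw [if_neg hc] at hL
          simp at hL
      · rintro ⟨hlen, -, hin⟩
        have hc : c ∈ S := by simpa using hin 0 (le_refl 0)
        rw [if_pos hc, Finset.mem_singleton]
        exact List.length_eq_zero_iff.mp hlen
  | succ n ih =>
      constructor
      · intro hL
        simp only [stF, Finset.mem_filter, Finset.mem_image, Finset.mem_product] at hL
        obtain ⟨⟨⟨M, u⟩, ⟨hM, hu⟩, rfl⟩, hend⟩ := hL
        obtain ⟨hlen, hmem, hin⟩ := ih.mp hM
        refine ⟨by simp [hlen], ?_, ?_⟩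
        · intro s hs
          rcases List.mem_append.mp hs with h | h
          · exact hmem s h
          · simpa using (by simpa using h : s = u) ▸ hu
        · intro k hk
          rcases Nat.lt_or_ge k (n + 1) with hk' | hk'
          · have hkn : k ≤ n := by omega
            rw [List.take_append_of_le_length (by omega)]
            exact hin k hkn
          · have : k = n + 1 := by omega
            subst this
            rw [List.take_of_length_le (by simp [hlen])]
            exact hend
      · rintro ⟨hlen, hmem, hin⟩
        rcases List.eq_nil_or_concat L with rfl | ⟨M, u, rfl⟩
        · simp at hlen
        · simp only [List.concat_eq_append] at hlen hmem hin ⊢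
          have hMlen : M.length = n := by
            have := hlen
            simp at this
            omega
          simp only [stF, Finset.mem_filter, Finset.mem_image, Finset.mem_product]
          refine ⟨⟨(M, u), ⟨ih.mpr ⟨hMlen, ?_, ?_⟩, hmem u (by simp)⟩, rfl⟩, ?_⟩
          · exact fun s hs => hmem s (List.mem_append_left _ hs)
          · intro k hk
            rw [← List.take_append_of_le_length (by omega : k ≤ M.length)]
            exact hin k (by omega)
          · rw [← List.take_of_length_le (le_refl (M ++ [u]).length)]
            have := hin (n + 1) (le_refl _)
            rw [List.take_of_length_le (by simp [hMlen])] at this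
            simpa using this

lemma mem_exF {t : Finset G} {n : ℕ} {L : List G} (hL : L ∈ exF t S c n) :
    L.length = n ∧ (∀ s ∈ L, s ∈ t) ∧ Stays S c L ∧ c * L.prod ∉ S := by
  cases n with
  | zero => simp [exF] at hL
  | succ n =>
      simp only [exF, Finset.mem_filter, Finset.mem_image, Finset.mem_product] at hL
      obtain ⟨⟨⟨M, u⟩, ⟨hM, hu⟩, rfl⟩, hend⟩ := hL
      obtain ⟨hlen, hmem, hin⟩ := mem_stF_iff.mp hM
      refine ⟨by simp [hlen], ?_, ?_, hend⟩
      · intro s hs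
        rcases List.mem_append.mp hs with h | h
        · exact hmem s h
        · simpa using (by simpa using h : s = u) ▸ hu
      · intro k hk
        have hkM : k ≤ M.length := by
          simp only [List.length_append, List.length_singleton] at hk
          omega
        rw [List.take_append_of_le_length hkM]
        exact hin k (hlen ▸ hkM)

end RWaux
namespace RWaux

variable {G : Type*} [Group G] {μ : G → ℝ} {S : Set G} {a x c g0 : G} {f : G → ℝ}

lemma sumR_mu_eq_one (hfin : (Function.support μ).Finite) (hsum : ∑ᶠ s : G, μ s = 1) :
    ∑ s ∈ hfin.toFinset, μ s = 1 := by
  rw [← finsum_eq_sum_of_support_subset _ (by simp : Function.support μ ⊆ ↑hfin.toFinset), hsum]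

lemma sumR_sLists (hfin : (Function.support μ).Finite) (hsum : ∑ᶠ s : G, μ s = 1) (n : ℕ) :
    ∑ L ∈ sLists hfin.toFinset n, wR μ L = 1 := by
  induction n with
  | zero => simp [sLists, wR]
  | succ n ih =>
      rw [sLists, Finset.sum_image (fun p hp q hq h => by simpa [Prod.ext_iff] using h),
        Finset.sum_product]
      have : ∀ s M, wR μ (s :: M) = μ s * wR μ M := fun s M => by simp [wR]
      simp only [this]
      rw [← Finset.sum_mul_sum, ih, sumR_mu_eq_one hfin hsum, one_mul]

lemma sum_stF_step (hfin : (Function.support μ).Finite) (hharm : IsMuHarmonic μ f) (n : ℕ) :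
    ∑ L ∈ stF hfin.toFinset S c n, wR μ L * f (c * L.prod)
      = (∑ L ∈ exF hfin.toFinset S c (n + 1), wR μ L * f (c * L.prod))
        + ∑ L ∈ stF hfin.toFinset S c (n + 1), wR μ L * f (c * L.prod) := by
  classical
  set t := hfin.toFinset
  have step1 : ∀ L ∈ stF t S c n, wR μ L * f (c * L.prod)
      = ∑ u ∈ t, wR μ (L ++ [u]) * f (c * (L ++ [u]).prod) := by
    intro L _
    rw [hharm (c * L.prod), finsum_mu_eq hfin, Finset.mul_sum]
    refine Finset.sum_congr rfl fun u _ => ?_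
    rw [wR_append]
    simp [wR, mul_assoc]
  rw [Finset.sum_congr rfl step1, ← Finset.sum_product']
  have himg : ∑ p ∈ stF t S c n ×ˢ t, wR μ (p.1 ++ [p.2]) * f (c * (p.1 ++ [p.2]).prod)
      = ∑ K ∈ (stF t S c n ×ˢ t).image (fun p => p.1 ++ [p.2]),
          wR μ K * f (c * K.prod) := by
    rw [Finset.sum_image (fun p _ q _ h => concat_inj h)]
  rw [himg, ← Finset.sum_filter_add_sum_filter_not _ (fun L => c * L.prod ∉ S)]
  congr 1
  refine Finset.sum_congr ?_ fun K _ => rfl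
  ext K
  simp only [stF, not_not, Finset.mem_filter]

lemma rep_inv (hfin : (Function.support μ).Finite) (hharm : IsMuHarmonic μ f)
    (hc : c ∈ S) (n : ℕ) :
    f c = (∑ m ∈ Finset.range (n + 1), ∑ L ∈ exF hfin.toFinset S c m, wR μ L * f (c * L.prod))
      + ∑ L ∈ stF hfin.toFinset S c n, wR μ L * f (c * L.prod) := by
  induction n with
  | zero =>
      simp only [zero_add, Finset.range_one, Finset.sum_singleton]
      rw [show exF hfin.toFinset S c 0 = ∅ from rfl]
      simp only [Finset.sum_empty, zero_add]
      rw [show stF hfin.toFinset S c 0 = if c ∈ S then {([] : List G)} else ∅ from rfl,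
        if_pos hc]
      simp
  | succ n ih =>
      rw [Finset.sum_range_succ, add_assoc, ← sum_stF_step hfin hharm n]
      exact ih

/-- Probability of staying inside `S` for `n` steps. -/
noncomputable def rhoF (μ : G → ℝ) (t : Finset G) (S : Set G) (c : G) (n : ℕ) : ℝ :=
  ∑ L ∈ stF t S c n, wR μ L

lemma rhoF_nonneg (hpos : ∀ s : G, 0 ≤ μ s) (t : Finset G) (n : ℕ) :
    0 ≤ rhoF μ t S c n :=
  Finset.sum_nonneg fun L _ => wR_nonneg hpos L

lemma exists_rhoF_small (hpos : ∀ s : G, 0 ≤ μ s) (hfin : (Function.support μ).Finite)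
    (hsum : ∑ᶠ s : G, μ s = 1)
    (hgen : ∀ g : G, ∃ L : List G, (∀ s ∈ L, 0 < μ s) ∧ L.prod = g)
    (hS : S.Finite) (hg0 : g0 ∉ S) {η : ℝ} (hη : 0 < η) :
    ∃ n : ℕ, rhoF μ hfin.toFinset S c n < η := by
  classical
  set t := hfin.toFinset with htdef
  by_cases hSne : S.Nonempty
  · -- escape paths
    have hesc : ∀ y : G, ∃ P : List G, (∀ s ∈ P, s ∈ t) ∧ y * P.prod ∉ S := by
      intro y
      obtain ⟨L, hL1, hL2⟩ := hgen (y⁻¹ * g0)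
      refine ⟨L, fun s hs => hfin.mem_toFinset.mpr (ne_of_gt (hL1 s hs)), ?_⟩
      rw [hL2]
      simpa using hg0
    have htne : t.Nonempty := by
      by_contra h
      rw [Finset.not_nonempty_iff_eq_empty] at h
      have := sumR_mu_eq_one hfin hsum
      rw [htdef] at h
      rw [h] at this
      simp at this
    obtain ⟨s0, hs0⟩ := htne
    set Sf := hS.toFinset with hSf
    have hSfne : Sf.Nonempty := by
      obtain ⟨y, hy⟩ := hSne
      exact ⟨y, hS.mem_toFinset.mpr hy⟩
    set P : G → List G := fun y => (hesc y).choose with hP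
    set N := Sf.sup (fun y => (P y).length) with hN
    set Q : G → List G := fun y => P y ++ List.replicate (N - (P y).length) s0 with hQ
    have hQlen : ∀ y ∈ Sf, (Q y).length = N := by
      intro y hy
      have h1 : (P y).length ≤ N := Finset.le_sup (f := fun y => (P y).length) hy
      simp only [hQ, List.length_append, List.length_replicate]
      omega
    have hQmem : ∀ y, ∀ s ∈ Q y, s ∈ t := by
      intro y s hs
      rcases List.mem_append.mp hs with h | h
      · exact (hesc y).choose_spec.1 s h
      · rwa [List.eq_of_mem_replicate h]
    have hQsLists : ∀ y ∈ Sf, Q y ∈ sLists t N :=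
      fun y hy => mem_sLists.mpr ⟨hQlen y hy, hQmem y⟩
    have hQbad : ∀ y, y * ((Q y).take (P y).length).prod ∉ S := by
      intro y
      rw [hQ]
      simp only []
      rw [List.take_left]
      exact (hesc y).choose_spec.2
    have hQpos : ∀ y, 0 < wR μ (Q y) := by
      intro y
      refine wR_pos hpos fun s hs => ?_
      have := hQmem y s hs
      rw [htdef, hfin.mem_toFinset] at this
      exact this
    set δ := Sf.inf' hSfne (fun y => wR μ (Q y)) with hδ
    have hδpos : 0 < δ := by
      rw [hδ, Finset.lt_inf'_iff]
      exact fun y _ => hQpos y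
    have hδle : δ ≤ 1 := by
      obtain ⟨y, hy⟩ := hSfne
      exact le_trans (Finset.inf'_le _ hy) (wR_le_one hpos hfin hsum _)
    -- bad sets
    set badF : G → Finset (List G) :=
      fun y => (sLists t N).filter (fun M => ∀ k ≤ N, y * (M.take k).prod ∈ S) with hbadF
    have hbad_le : ∀ y ∈ Sf, ∑ M ∈ badF y, wR μ M ≤ 1 - δ := by
      intro y hy
      have hsub : badF y ⊆ (sLists t N).erase (Q y) := by
        intro M hM
        rw [Finset.mem_erase]
        simp only [hbadF, Finset.mem_filter] at hM
        refine ⟨?_, hM.1⟩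
        rintro rfl
        have hPN : (P y).length ≤ N := Finset.le_sup (f := fun y => (P y).length) hy
        exact hQbad y (hM.2 (P y).length hPN)
      calc ∑ M ∈ badF y, wR μ M ≤ ∑ M ∈ (sLists t N).erase (Q y), wR μ M :=
            Finset.sum_le_sum_of_subset_of_nonneg hsub (fun M _ _ => wR_nonneg hpos M)
        _ = (∑ M ∈ sLists t N, wR μ M) - wR μ (Q y) :=
            Finset.sum_erase_eq_sub (hQsLists y hy)
        _ = 1 - wR μ (Q y) := by rw [htdef, sumR_sLists hfin hsum]
        _ ≤ 1 - δ := by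
            have := Finset.inf'_le (fun y => wR μ (Q y)) hy
            linarith [this]
    -- decay step
    have hdecay : ∀ n : ℕ, rhoF μ t S c (n + N) ≤ (1 - δ) * rhoF μ t S c n := by
      intro n
      have hmap : ∀ K ∈ stF t S c (n + N),
          K.take n ∈ stF t S c n ∧ K.drop n ∈ badF (c * (K.take n).prod) := by
        intro K hK
        obtain ⟨hlen, hmem, hin⟩ := mem_stF_iff.mp hK
        have hn : n ≤ K.length := by omega
        constructor
        · refine mem_stF_iff.mpr ⟨by rw [List.length_take, hlen]; omega,
            fun s hs => hmem s (List.mem_of_mem_take hs), ?_⟩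
          intro k hk
          rw [List.take_take, min_eq_left hk]
          exact hin k (by omega)
        · simp only [hbadF, Finset.mem_filter]
          constructor
          · exact mem_sLists.mpr ⟨by rw [List.length_drop, hlen]; omega,
              fun s hs => hmem s (List.mem_of_mem_drop hs)⟩
          · intro k hk
            rw [mul_assoc, ← List.prod_append, ← List.take_add]
            exact hin (n + k) (by omega)
      have hinj : ∀ K ∈ stF t S c (n + N), ∀ K' ∈ stF t S c (n + N),
          (fun K : List G => (⟨K.take n, K.drop n⟩ : Σ _ : List G, List G)) K
            = (fun K => ⟨K.take n, K.drop n⟩) K' → K = K' := by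
        intro K _ K' _ h
        simp only [Sigma.mk.inj_iff] at h
        rw [← List.take_append_drop n K, ← List.take_append_drop n K', h.1]
        rw [heq_iff_eq] at h
        rw [h.2]
      calc rhoF μ t S c (n + N)
          = ∑ K ∈ stF t S c (n + N), wR μ (K.take n) * wR μ (K.drop n) := by
            refine Finset.sum_congr rfl fun K _ => ?_
            rw [← wR_append, List.take_append_drop]
        _ = ∑ p ∈ (stF t S c (n + N)).image
              (fun K => (⟨K.take n, K.drop n⟩ : Σ _ : List G, List G)),
              wR μ p.1 * wR μ p.2 := by
            rw [Finset.sum_image hinj]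
        _ ≤ ∑ p ∈ (stF t S c n).sigma (fun L => badF (c * L.prod)),
              wR μ p.1 * wR μ p.2 := by
            refine Finset.sum_le_sum_of_subset_of_nonneg ?_
              (fun p _ _ => mul_nonneg (wR_nonneg hpos _) (wR_nonneg hpos _))
            intro p hp
            simp only [Finset.mem_image] at hp
            obtain ⟨K, hK, rfl⟩ := hp
            obtain ⟨h1, h2⟩ := hmap K hK
            exact Finset.mem_sigma.mpr ⟨h1, h2⟩
        _ = ∑ L ∈ stF t S c n, ∑ M ∈ badF (c * L.prod), wR μ L * wR μ M :=
            Finset.sum_sigma _ _ _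
        _ ≤ ∑ L ∈ stF t S c n, wR μ L * (1 - δ) := by
            refine Finset.sum_le_sum fun L hL => ?_
            rw [← Finset.mul_sum]
            refine mul_le_mul_of_nonneg_left ?_ (wR_nonneg hpos L)
            refine hbad_le (c * L.prod) ?_
            rw [hSf, hS.mem_toFinset]
            obtain ⟨hlen, -, hin⟩ := mem_stF_iff.mp hL
            have := hin n (le_refl n)
            rwa [List.take_of_length_le (by omega)] at this
        _ = (1 - δ) * rhoF μ t S c n := by
            rw [rhoF, Finset.mul_sum]
            exact Finset.sum_congr rfl fun L _ => mul_comm _ _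
    have hiter : ∀ k : ℕ, rhoF μ t S c (k * N) ≤ (1 - δ) ^ k := by
      intro k
      induction k with
      | zero =>
          simp only [zero_mul, pow_zero]
          rw [rhoF]
          by_cases hc : c ∈ S
          · rw [show stF t S c 0 = if c ∈ S then {([] : List G)} else ∅ from rfl, if_pos hc]
            simp
          · rw [show stF t S c 0 = if c ∈ S then {([] : List G)} else ∅ from rfl, if_neg hc]
            simp
      | succ k ih =>
          have h1 : (k + 1) * N = k * N + N := by ring
          rw [h1]
          calc rhoF μ t S c (k * N + N) ≤ (1 - δ) * rhoF μ t S c (k * N) := hdecay _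
            _ ≤ (1 - δ) * (1 - δ) ^ k :=
                mul_le_mul_of_nonneg_left ih (by linarith)
            _ = (1 - δ) ^ (k + 1) := by ring
    obtain ⟨k, hk⟩ := exists_pow_lt_of_lt_one hη (by linarith : 1 - δ < 1)
    exact ⟨k * N, lt_of_le_of_lt (hiter k) hk⟩
  · -- S empty : c ∉ S, rhoF 0 = 0
    have hc : c ∉ S := fun h => hSne ⟨c, h⟩
    refine ⟨0, ?_⟩
    rw [rhoF, show stF t S c 0 = if c ∈ S then {([] : List G)} else ∅ from rfl, if_neg hc]
    simpa using hη

end RWaux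
namespace RWaux

variable {G : Type*} [Group G] {μ : G → ℝ} {S : Set G} {a x c g0 : G} {f : G → ℝ}

open Classical in
/-- All exit lists up to time `n`. -/
noncomputable def EXF (t : Finset G) (S : Set G) (c : G) (n : ℕ) : Finset (List G) :=
  (Finset.range (n + 1)).biUnion (exF t S c)

open Classical in
noncomputable def qF (μ : G → ℝ) (t : Finset G) (S : Set G) (c : G) (n : ℕ) (x : G) : ℝ :=
  ∑ L ∈ (EXF t S c n).filter (fun L => c * L.prod = x), wR μ L

lemma qF_nonneg (hpos : ∀ s : G, 0 ≤ μ s) {t : Finset G} {n : ℕ} : 0 ≤ qF μ t S c n x :=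
  Finset.sum_nonneg fun L _ => wR_nonneg hpos L

lemma mem_EXF {t : Finset G} {n : ℕ} {L : List G} (hL : L ∈ EXF t S c n) :
    (∀ s ∈ L, s ∈ t) ∧ Stays S c L ∧ c * L.prod ∉ S := by
  simp only [EXF, Finset.mem_biUnion] at hL
  obtain ⟨m, -, hm⟩ := hL
  obtain ⟨-, h2, h3, h4⟩ := mem_exF hm
  exact ⟨h2, h3, h4⟩

lemma endpoint_mem_bdry (hpos : ∀ s : G, 0 ≤ μ s) (hfin : (Function.support μ).Finite)
    {n : ℕ} {L : List G} (hL : L ∈ EXF hfin.toFinset S c n) (hc : c ∈ S) :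
    c * L.prod ∈ bdry μ S := by
  obtain ⟨hmem, hst, hout⟩ := mem_EXF hL
  rcases List.eq_nil_or_concat L with rfl | ⟨M, u, rfl⟩
  · exfalso
    apply hout
    simpa using hc
  · simp only [List.concat_eq_append] at hmem hst hout ⊢
    refine ⟨hout, c * M.prod, ?_, ?_⟩
    · have := hst M.length (by simp)
      rwa [List.take_left] at this
    · have hu : u ∈ hfin.toFinset := hmem u (by simp)
      have : (c * M.prod)⁻¹ * (c * (M ++ [u]).prod) = u := by
        rw [List.prod_append, List.prod_singleton]
        group
      rw [this]
      exact lt_of_le_of_ne (hpos u) (Ne.symm (by simpa using hfin.mem_toFinset.mp hu))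

lemma exF_length {t : Finset G} {m : ℕ} {L : List G} (hL : L ∈ exF t S c m) :
    L.length = m := (mem_exF hL).1

/-- Grouped representation identity at finite time. -/
lemma rep_grouped (hpos : ∀ s : G, 0 ≤ μ s) (hfin : (Function.support μ).Finite)
    (hS : S.Finite) (hharm : IsMuHarmonic μ f) (hc : c ∈ S) (n : ℕ) :
    f c = (∑ x ∈ (bdry_finite hS hfin).toFinset, qF μ hfin.toFinset S c n x * f x)
      + ∑ L ∈ stF hfin.toFinset S c n, wR μ L * f (c * L.prod) := by
  classical
  set t := hfin.toFinset
  set Bf := (bdry_finite hS hfin).toFinset with hBf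
  have hdisj : ∀ m1 ∈ Finset.range (n + 1), ∀ m2 ∈ Finset.range (n + 1), m1 ≠ m2 →
      Disjoint (exF t S c m1) (exF t S c m2) := by
    intro m1 _ m2 _ hne
    refine Finset.disjoint_left.mpr fun L h1 h2 => ?_
    exact hne ((exF_length h1).symm.trans (exF_length h2))
  have hbi : ∑ m ∈ Finset.range (n + 1), ∑ L ∈ exF t S c m, wR μ L * f (c * L.prod)
      = ∑ L ∈ EXF t S c n, wR μ L * f (c * L.prod) := by
    rw [EXF, Finset.sum_biUnion hdisj]
  have hmaps : ∀ L ∈ EXF t S c n, c * L.prod ∈ Bf := by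
    intro L hL
    rw [hBf, Set.Finite.mem_toFinset]
    exact endpoint_mem_bdry hpos hfin hL hc
  have hfib : ∑ L ∈ EXF t S c n, wR μ L * f (c * L.prod)
      = ∑ x ∈ Bf, qF μ t S c n x * f x := by
    rw [← Finset.sum_fiberwise_of_maps_to hmaps (fun L => wR μ L * f (c * L.prod))]
    refine Finset.sum_congr rfl fun x _ => ?_
    rw [qF, Finset.sum_mul]
    refine Finset.sum_congr rfl fun L hL => ?_
    rw [(Finset.mem_filter.mp hL).2]
  rw [rep_inv hfin hharm hc n, hbi, hfib]

lemma one_harmonic (hsum : ∑ᶠ s : G, μ s = 1) : IsMuHarmonic μ (fun _ => (1 : ℝ)) := by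
  intro g
  simp only [mul_one]
  exact hsum.symm

lemma rep_mass (hpos : ∀ s : G, 0 ≤ μ s) (hfin : (Function.support μ).Finite)
    (hsum : ∑ᶠ s : G, μ s = 1) (hS : S.Finite) (hc : c ∈ S) (n : ℕ) :
    (1 : ℝ) = (∑ x ∈ (bdry_finite hS hfin).toFinset, qF μ hfin.toFinset S c n x)
      + rhoF μ hfin.toFinset S c n := by
  have := rep_grouped (f := fun _ => (1 : ℝ)) hpos hfin hS (one_harmonic hsum) hc n
  simpa [rhoF] using this

lemma qF_le_exitProb (hpos : ∀ s : G, 0 ≤ μ s) (hfin : (Function.support μ).Finite)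
    (hsum : ∑ᶠ s : G, μ s = 1) (hx : x ∉ S) {n : ℕ} :
    qF μ hfin.toFinset S c n x ≤ exitProb μ S c x := by
  classical
  rw [qF]
  set T := (EXF hfin.toFinset S c n).filter (fun L => c * L.prod = x) with hT
  have h1 : ∑ L ∈ T, wR μ L = ∑ L ∈ T,
      (if (∀ k < L.length, c * (L.take k).prod ∈ S) ∧ c * L.prod = x
        then (L.map μ).prod else 0) := by
    refine Finset.sum_congr rfl fun L hL => ?_
    rw [Finset.mem_filter] at hL
    obtain ⟨-, hst, -⟩ := mem_EXF hL.1
    rw [if_pos ⟨hst, hL.2⟩]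
    rfl
  rw [h1, exitProb]
  refine Summable.sum_le_tsum T (fun L _ => ?_) (summable_exit hpos hfin hsum hx)
  split
  · exact wR_nonneg hpos L
  · exact le_refl 0

lemma sum_exitProb_le_one (hpos : ∀ s : G, 0 ≤ μ s) (hfin : (Function.support μ).Finite)
    (hsum : ∑ᶠ s : G, μ s = 1) (hS : S.Finite) :
    ∑ x ∈ (bdry_finite hS hfin).toFinset, exitProb μ S c x ≤ 1 := by
  classical
  set Bf := (bdry_finite hS hfin).toFinset with hBf
  have hB : ∀ x ∈ Bf, x ∉ S := by
    intro x hx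
    rw [hBf, Set.Finite.mem_toFinset] at hx
    exact hx.1
  have hEN : ∑ x ∈ Bf, EP μ S c x ≤ 1 := by
    have hswap : ∑ x ∈ Bf, EP μ S c x = ∑' L : List G,
        ∑ x ∈ Bf, (if Stays S c L ∧ c * L.prod = x then wt μ L else 0) := by
      rw [Summable.tsum_finsetSum (fun x _ => ENNReal.summable)]
      rfl
    rw [hswap]
    have hterm : ∀ L : List G, (∑ x ∈ Bf, (if Stays S c L ∧ c * L.prod = x then wt μ L else 0))
        ≤ (if Stays S c L ∧ c * L.prod ∉ S then wt μ L else 0) := by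
      intro L
      by_cases hst : Stays S c L
      · have : ∀ x ∈ Bf, (if Stays S c L ∧ c * L.prod = x then wt μ L else 0)
            = (if c * L.prod = x then wt μ L else 0) := by
          intro x _
          by_cases h : c * L.prod = x
          · rw [if_pos ⟨hst, h⟩, if_pos h]
          · rw [if_neg (fun hc => h hc.2), if_neg h]
        rw [Finset.sum_congr rfl this, Finset.sum_ite_eq Bf (c * L.prod) (fun _ => wt μ L)]
        by_cases h : c * L.prod ∈ Bf
        · rw [if_pos h, if_pos ⟨hst, hB _ h⟩]
        · rw [if_neg h]
          exact zero_le
      · have : ∀ x ∈ Bf, (if Stays S c L ∧ c * L.prod = x then wt μ L else 0) = 0 := by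
          intro x _
          rw [if_neg (fun h => hst h.1)]
        rw [Finset.sum_congr rfl this]
        simp
    calc ∑' L : List G, ∑ x ∈ Bf, (if Stays S c L ∧ c * L.prod = x then wt μ L else 0)
        ≤ ∑' L : List G, (if Stays S c L ∧ c * L.prod ∉ S then wt μ L else 0) :=
          ENNReal.tsum_le_tsum hterm
      _ ≤ 1 := tsum_ite_le_one hpos hfin hsum _ (fun L h => h)
  have hne : ∀ x ∈ Bf, EP μ S c x ≠ ⊤ := fun x hx => EP_ne_top hpos hfin hsum (hB x hx)
  have : ∑ x ∈ Bf, exitProb μ S c x = (∑ x ∈ Bf, EP μ S c x).toReal := by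
    rw [ENNReal.toReal_sum hne]
    exact Finset.sum_congr rfl fun x _ => exitProb_eq_toReal hpos
  rw [this]
  calc (∑ x ∈ Bf, EP μ S c x).toReal ≤ (1 : ℝ≥0∞).toReal :=
        ENNReal.toReal_mono ENNReal.one_ne_top hEN
    _ = 1 := by simp

/-- The representation theorem: a nonnegative harmonic function equals the exit-probability
average of its boundary values. -/
lemma representation (hpos : ∀ s : G, 0 ≤ μ s) (hfin : (Function.support μ).Finite)
    (hsum : ∑ᶠ s : G, μ s = 1)
    (hgen : ∀ g : G, ∃ L : List G, (∀ s ∈ L, 0 < μ s) ∧ L.prod = g)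
    (hS : S.Finite) (hharm : IsMuHarmonic μ f) (hf : ∀ g : G, 0 ≤ f g)
    (hc : c ∈ S) (hg0 : g0 ∉ S) :
    f c = ∑ x ∈ (bdry_finite hS hfin).toFinset, exitProb μ S c x * f x := by
  classical
  set t := hfin.toFinset
  set Bf := (bdry_finite hS hfin).toFinset with hBf
  set MB := ∑ x ∈ Bf, f x with hMB
  set MS := ∑ y ∈ hS.toFinset, f y with hMS
  have hMBnn : 0 ≤ MB := Finset.sum_nonneg fun x _ => hf x
  have hMSnn : 0 ≤ MS := Finset.sum_nonneg fun y _ => hf y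
  have hB : ∀ x ∈ Bf, x ∉ S := by
    intro x hx
    rw [hBf, Set.Finite.mem_toFinset] at hx
    exact hx.1
  set d := f c - ∑ x ∈ Bf, exitProb μ S c x * f x with hd
  have key : ∀ n : ℕ, |d| ≤ rhoF μ t S c n * (MB + MS) := by
    intro n
    have hid := rep_grouped hpos hfin hS hharm hc n
    have hq : ∀ x ∈ Bf, qF μ t S c n x ≤ exitProb μ S c x :=
      fun x hx => qF_le_exitProb hpos hfin hsum (hB x hx)
    have hqsum : ∑ x ∈ Bf, qF μ t S c n x = 1 - rhoF μ t S c n := by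
      have := rep_mass hpos hfin hsum hS hc n
      linarith [this]
    have hexit_le : ∑ x ∈ Bf, exitProb μ S c x ≤ 1 :=
      sum_exitProb_le_one hpos hfin hsum hS
    -- the difference between true and truncated boundary sums
    have hbound1 : |∑ x ∈ Bf, qF μ t S c n x * f x - ∑ x ∈ Bf, exitProb μ S c x * f x|
        ≤ rhoF μ t S c n * MB := by
      rw [← Finset.sum_sub_distrib]
      have h1 : ∑ x ∈ Bf, (qF μ t S c n x * f x - exitProb μ S c x * f x)
          = -(∑ x ∈ Bf, (exitProb μ S c x - qF μ t S c n x) * f x) := by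
        rw [← Finset.sum_neg_distrib]
        exact Finset.sum_congr rfl fun x _ => by ring
      rw [h1, abs_neg]
      have h2 : 0 ≤ ∑ x ∈ Bf, (exitProb μ S c x - qF μ t S c n x) * f x :=
        Finset.sum_nonneg fun x hx => mul_nonneg (by linarith [hq x hx]) (hf x)
      rw [abs_of_nonneg h2]
      have h3 : ∀ x ∈ Bf, (exitProb μ S c x - qF μ t S c n x) * f x
          ≤ (exitProb μ S c x - qF μ t S c n x) * MB := by
        intro x hx
        refine mul_le_mul_of_nonneg_left ?_ (by linarith [hq x hx])
        exact Finset.single_le_sum (fun y _ => hf y) hx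
      calc ∑ x ∈ Bf, (exitProb μ S c x - qF μ t S c n x) * f x
          ≤ ∑ x ∈ Bf, (exitProb μ S c x - qF μ t S c n x) * MB := Finset.sum_le_sum h3
        _ = (∑ x ∈ Bf, exitProb μ S c x - ∑ x ∈ Bf, qF μ t S c n x) * MB := by
            rw [← Finset.sum_mul, Finset.sum_sub_distrib]
        _ ≤ rhoF μ t S c n * MB := by
            refine mul_le_mul_of_nonneg_right ?_ hMBnn
            rw [hqsum]
            linarith
    have hbound2 : |∑ L ∈ stF t S c n, wR μ L * f (c * L.prod)| ≤ rhoF μ t S c n * MS := by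
      have hrem : ∀ L ∈ stF t S c n, wR μ L * f (c * L.prod) ≤ wR μ L * MS := by
        intro L hL
        refine mul_le_mul_of_nonneg_left ?_ (wR_nonneg hpos L)
        obtain ⟨hlen, -, hin⟩ := mem_stF_iff.mp hL
        have hend : c * L.prod ∈ S := by
          have := hin L.length (by omega)
          rwa [List.take_of_length_le (le_refl _)] at this
        exact Finset.single_le_sum (fun y _ => hf y) (hS.mem_toFinset.mpr hend)
      have hnn : 0 ≤ ∑ L ∈ stF t S c n, wR μ L * f (c * L.prod) :=
        Finset.sum_nonneg fun L _ => mul_nonneg (wR_nonneg hpos L) (hf _)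
      rw [abs_of_nonneg hnn]
      calc ∑ L ∈ stF t S c n, wR μ L * f (c * L.prod)
          ≤ ∑ L ∈ stF t S c n, wR μ L * MS := Finset.sum_le_sum hrem
        _ = rhoF μ t S c n * MS := by rw [rhoF, Finset.sum_mul]
    have hd' : d = (∑ x ∈ Bf, qF μ t S c n x * f x - ∑ x ∈ Bf, exitProb μ S c x * f x)
        + ∑ L ∈ stF t S c n, wR μ L * f (c * L.prod) := by
      rw [hd]
      linarith [hid]
    rw [hd']
    calc |(∑ x ∈ Bf, qF μ t S c n x * f x - ∑ x ∈ Bf, exitProb μ S c x * f x)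
          + ∑ L ∈ stF t S c n, wR μ L * f (c * L.prod)|
        ≤ |∑ x ∈ Bf, qF μ t S c n x * f x - ∑ x ∈ Bf, exitProb μ S c x * f x|
          + |∑ L ∈ stF t S c n, wR μ L * f (c * L.prod)| := abs_add_le _ _
      _ ≤ rhoF μ t S c n * MB + rhoF μ t S c n * MS := add_le_add hbound1 hbound2
      _ = rhoF μ t S c n * (MB + MS) := by ring
  by_contra hne
  have hdpos : 0 < |d| := by
    rw [abs_pos]
    intro h
    apply hne
    rw [hd] at h
    linarith
  have hηpos : 0 < |d| / (MB + MS + 1) := by positivity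
  obtain ⟨n, hn⟩ := exists_rhoF_small hpos hfin hsum hgen hS hg0 hηpos
  have h1 := key n
  have h2 : rhoF μ t S c n * (MB + MS) < |d| := by
    have hρnn : 0 ≤ rhoF μ t S c n := rhoF_nonneg hpos t n
    have h3 : rhoF μ t S c n * (MB + MS + 1) < |d| :=
      (lt_div_iff₀ (by linarith : (0:ℝ) < MB + MS + 1)).mp hn
    nlinarith
  linarith

end RWaux
namespace RWaux

variable {G : Type*} [Group G] {μ : G → ℝ} {S : Set G} {a b x c g0 : G} {f : G → ℝ}

lemma harmonic_const_of_finite [Finite G] (hpos : ∀ s : G, 0 ≤ μ s)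
    (hfin : (Function.support μ).Finite) (hsum : ∑ᶠ s : G, μ s = 1)
    (hgen : ∀ g : G, ∃ L : List G, (∀ s ∈ L, 0 < μ s) ∧ L.prod = g)
    (hharm : IsMuHarmonic μ f) (g h : G) : f g = f h := by
  classical
  obtain ⟨c, hcmax⟩ := Finite.exists_max f
  suffices hall : ∀ g : G, f g = f c by rw [hall g, hall h]
  have hstep : ∀ g : G, f g = f c → ∀ s ∈ hfin.toFinset, f (g * s) = f c := by
    intro g hg s hs
    have h1 : f g = ∑ u ∈ hfin.toFinset, μ u * f (g * u) := by
      rw [hharm g, finsum_mu_eq hfin]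
    have h2 : ∑ u ∈ hfin.toFinset, μ u * (f c - f (g * u)) = 0 := by
      have h3 : ∑ u ∈ hfin.toFinset, μ u * (f c - f (g * u))
          = (∑ u ∈ hfin.toFinset, μ u) * f c - ∑ u ∈ hfin.toFinset, μ u * f (g * u) := by
        rw [Finset.sum_mul, ← Finset.sum_sub_distrib]
        exact Finset.sum_congr rfl fun u _ => by ring
      rw [h3, sumR_mu_eq_one hfin hsum, one_mul, ← h1, hg]
      ring
    have h4 := (Finset.sum_eq_zero_iff_of_nonneg
      (fun u _ => mul_nonneg (hpos u) (by linarith [hcmax (g * u)]))).mp h2 s hs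
    have h5 : μ s ≠ 0 := by simpa using hfin.mem_toFinset.mp hs
    have h6 : f c - f (g * s) = 0 := by
      rcases mul_eq_zero.mp h4 with h | h
      · exact absurd h h5
      · exact h
    linarith
  have hlist : ∀ L : List G, (∀ s ∈ L, 0 < μ s) → ∀ g : G, f g = f c →
      f (g * L.prod) = f c := by
    intro L
    induction L with
    | nil => intro _ g hg; simpa using hg
    | cons s M ih =>
        intro hmem g hg
        have h1 : f (g * s) = f c :=
          hstep g hg s (hfin.mem_toFinset.mpr (ne_of_gt (hmem s (by simp))))
        have := ih (fun u hu => hmem u (List.mem_cons_of_mem _ hu)) (g * s) h1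
        simpa [mul_assoc] using this
  intro g
  obtain ⟨L, hL1, hL2⟩ := hgen (c⁻¹ * g)
  have := hlist L hL1 c rfl
  rw [hL2] at this
  simpa using this

/-- The forward direction for infinite `G`. -/
lemma forward_infinite [Infinite G] (hpos : ∀ s : G, 0 ≤ μ s)
    (hfin : (Function.support μ).Finite) (hsum : ∑ᶠ s : G, μ s = 1)
    (hgen : ∀ g : G, ∃ L : List G, (∀ s ∈ L, 0 < μ s) ∧ L.prod = g)
    (hf : ∀ g : G, 0 < f g) (hharm : IsMuHarmonic μ f) (hne : f a ≠ f b) :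
    ∃ ε : ℝ, 0 < ε ∧ ∀ F : Set G, F.Finite →
      ∃ S : Set G, S.Finite ∧ F ∪ {a, b} ⊆ S ∧ ε ≤ epsRatio μ S a b := by
  classical
  obtain ⟨L, hL1, hL2⟩ := hgen (a⁻¹ * b)
  have hLb : a * L.prod = b := by rw [hL2]; simp
  have hLw : 0 < wR μ L := wR_pos hpos fun s hs => ne_of_gt (hL1 s hs)
  set ε := |f a - f b| / f a with hε
  have hεpos : 0 < ε := by
    apply div_pos _ (hf a)
    rw [abs_pos]
    intro h
    exact hne (by linarith)
  refine ⟨ε, hεpos, ?_⟩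
  intro F hF
  set PathS : Set G := (fun k => a * (L.take k).prod) '' (Set.Iic L.length) with hPathS
  have hPathfin : PathS.Finite := (Set.finite_Iic L.length).image _
  set S := F ∪ {a, b} ∪ PathS with hS
  have hSfin : S.Finite := (hF.union ((Set.finite_singleton b).insert a)).union hPathfin
  have hpath_mem : ∀ k ≤ L.length, a * (L.take k).prod ∈ S := by
    intro k hk
    exact Or.inr ⟨k, hk, rfl⟩
  have haS : a ∈ S := Or.inl (Or.inr (by simp))
  have hbS : b ∈ S := Or.inl (Or.inr (by simp))
  refine ⟨S, hSfin, ?_, ?_⟩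
  · intro g hg
    exact Or.inl hg
  -- now the main estimate
  obtain ⟨g0, hg0⟩ := (hSfin.infinite_compl).nonempty
  rw [Set.mem_compl_iff] at hg0
  set Bf := (bdry_finite hSfin hfin).toFinset with hBf
  have hB : ∀ y ∈ Bf, y ∉ S := fun y hy =>
    ((bdry_finite hSfin hfin).mem_toFinset.mp hy).1
  have hrepa : f a = ∑ y ∈ Bf, exitProb μ S a y * f y :=
    representation hpos hfin hsum hgen hSfin hharm (fun g => le_of_lt (hf g)) haS hg0
  have hrepb : f b = ∑ y ∈ Bf, exitProb μ S b y * f y :=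
    representation hpos hfin hsum hgen hSfin hharm (fun g => le_of_lt (hf g)) hbS hg0
  -- Harnack domination: exit prob from b positive implies from a positive
  have hdom : ∀ y, y ∉ S → 0 < exitProb μ S b y → 0 < exitProb μ S a y := by
    intro y hy hby
    have h2 := exitProb_path_le hpos hfin hsum hy L hpath_mem
    rw [hLb] at h2
    have hLw' : 0 < (List.map μ L).prod := hLw
    nlinarith [h2, hLw', hby]
  -- The sSup set
  set R := {r : ℝ | ∃ y ∈ bdry μ S, 0 < exitProb μ S a y ∧
    r = |exitProb μ S a y - exitProb μ S b y| / exitProb μ S a y} with hR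
  have hRfin : R.Finite := by
    have : R ⊆ (fun y => |exitProb μ S a y - exitProb μ S b y| / exitProb μ S a y) ''
        (bdry μ S) := by
      rintro r ⟨y, hy, -, rfl⟩
      exact ⟨y, hy, rfl⟩
    exact ((bdry_finite hSfin hfin).image _).subset this
  have hRbdd : BddAbove R := hRfin.bddAbove
  -- termwise estimate
  have hterm : ∀ y ∈ Bf, |exitProb μ S a y - exitProb μ S b y| * f y
      ≤ epsRatio μ S a b * (exitProb μ S a y * f y) := by
    intro y hy
    by_cases hap : 0 < exitProb μ S a y
    · have hmem : |exitProb μ S a y - exitProb μ S b y| / exitProb μ S a y ∈ R :=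
        ⟨y, (bdry_finite hSfin hfin).mem_toFinset.mp hy, hap, rfl⟩
      have hle : |exitProb μ S a y - exitProb μ S b y| / exitProb μ S a y
          ≤ epsRatio μ S a b := le_csSup hRbdd hmem
      have h1 : |exitProb μ S a y - exitProb μ S b y|
          ≤ epsRatio μ S a b * exitProb μ S a y := by
        rw [div_le_iff₀ hap] at hle
        linarith
      calc |exitProb μ S a y - exitProb μ S b y| * f y
          ≤ (epsRatio μ S a b * exitProb μ S a y) * f y :=
            mul_le_mul_of_nonneg_right h1 (le_of_lt (hf y))
        _ = epsRatio μ S a b * (exitProb μ S a y * f y) := by ring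
    · have hap0 : exitProb μ S a y = 0 :=
        le_antisymm (not_lt.mp hap) (exitProb_nonneg hpos)
      have hbp0 : exitProb μ S b y = 0 := by
        by_contra h
        have hbpos : 0 < exitProb μ S b y :=
          lt_of_le_of_ne (exitProb_nonneg hpos) (Ne.symm h)
        exact absurd (hdom y (hB y hy) hbpos) (by rw [hap0]; simp)
      rw [hap0, hbp0]
      simp
  -- assemble
  have hkey : |f a - f b| ≤ epsRatio μ S a b * f a := by
    calc |f a - f b|
        = |∑ y ∈ Bf, (exitProb μ S a y * f y - exitProb μ S b y * f y)| := by
          rw [Finset.sum_sub_distrib, ← hrepa, ← hrepb]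
      _
        ≤ ∑ y ∈ Bf, |exitProb μ S a y * f y - exitProb μ S b y * f y| :=
          Finset.abs_sum_le_sum_abs _ _
      _ = ∑ y ∈ Bf, |exitProb μ S a y - exitProb μ S b y| * f y := by
          refine Finset.sum_congr rfl fun y _ => ?_
          rw [← sub_mul, abs_mul, abs_of_nonneg (le_of_lt (hf y))]
      _ ≤ ∑ y ∈ Bf, epsRatio μ S a b * (exitProb μ S a y * f y) :=
          Finset.sum_le_sum hterm
      _ = epsRatio μ S a b * ∑ y ∈ Bf, exitProb μ S a y * f y := by
          rw [Finset.mul_sum]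
      _ = epsRatio μ S a b * f a := by rw [← hrepa]
  rw [hε, div_le_iff₀ (hf a)]
  linarith [hkey]

end RWaux
namespace RWaux

open Filter Topology

variable {G : Type*} [Group G] {μ : G → ℝ}

lemma backward (hpos : ∀ s : G, 0 ≤ μ s) (hfin : (Function.support μ).Finite)
    (hsum : ∑ᶠ s : G, μ s = 1)
    (hgen : ∀ g : G, ∃ L : List G, (∀ s ∈ L, 0 < μ s) ∧ L.prod = g)
    {a b : G} {ε : ℝ} (hε : 0 < ε)
    (hall : ∀ F : Set G, F.Finite →
      ∃ S : Set G, S.Finite ∧ F ∪ {a, b} ⊆ S ∧ ε ≤ epsRatio μ S a b) :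
    ∃ f : G → ℝ, (∀ g : G, 0 < f g) ∧ IsMuHarmonic μ f ∧ ∃ a b : G, f a ≠ f b := by
  classical
  -- the system of good sets
  set Good : Set G → Set (Set G) :=
    fun F => {S | S.Finite ∧ F ∪ {a, b} ⊆ S ∧ ε ≤ epsRatio μ S a b} with hGood
  have hGoodne : ∀ F : {F : Set G // F.Finite}, (Good F.1).Nonempty := by
    rintro ⟨F, hF⟩
    obtain ⟨S, h1, h2, h3⟩ := hall F hF
    exact ⟨S, h1, h2, h3⟩
  set l : Filter (Set G) := ⨅ F : {F : Set G // F.Finite}, 𝓟 (Good F.1) with hl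
  have hdir : Directed (· ≥ ·) (fun F : {F : Set G // F.Finite} => 𝓟 (Good F.1)) := by
    rintro ⟨F1, h1⟩ ⟨F2, h2⟩
    refine ⟨⟨F1 ∪ F2, h1.union h2⟩, ?_, ?_⟩ <;>
    · refine Filter.principal_mono.mpr fun S hS => ?_
      obtain ⟨hf1, hf2, hf3⟩ := hS
      exact ⟨hf1, fun y hy => hf2 (by
        rcases hy with hy | hy
        · exact Or.inl (by first | exact Or.inl hy | exact Or.inr hy)
        · exact Or.inr hy), hf3⟩
  have hlne : l.NeBot :=
    iInf_neBot_of_directed hdir fun F => Filter.principal_neBot_iff.mpr (hGoodne F)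
  set u : Ultrafilter (Set G) := @Ultrafilter.of _ l hlne with hu
  have hu_le : ↑u ≤ l := Ultrafilter.of_le l
  have hEv : ∀ F : Set G, F.Finite → ∀ᶠ S in (u : Filter (Set G)), S ∈ Good F := by
    intro F hF
    have h1 : (u : Filter (Set G)) ≤ 𝓟 (Good F) :=
      le_trans hu_le (iInf_le (fun F : {F : Set G // F.Finite} => 𝓟 (Good F.1)) ⟨F, hF⟩)
    exact Filter.le_principal_iff.mp h1
  -- the witness boundary point
  set xw : Set G → G := fun S =>
    if h : ∃ y, y ∈ bdry μ S ∧ 0 < exitProb μ S a y ∧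
        |exitProb μ S a y - exitProb μ S b y| / exitProb μ S a y = epsRatio μ S a b
    then h.choose else 1 with hxw
  have hattain : ∀ S : Set G, S.Finite → ε ≤ epsRatio μ S a b →
      xw S ∈ bdry μ S ∧ 0 < exitProb μ S a (xw S) ∧
      |exitProb μ S a (xw S) - exitProb μ S b (xw S)| / exitProb μ S a (xw S)
        = epsRatio μ S a b := by
    intro S hS hεle
    have hR : ∃ y, y ∈ bdry μ S ∧ 0 < exitProb μ S a y ∧
        |exitProb μ S a y - exitProb μ S b y| / exitProb μ S a y = epsRatio μ S a b := by
      set R := {r : ℝ | ∃ x ∈ bdry μ S, 0 < exitProb μ S a x ∧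
        r = |exitProb μ S a x - exitProb μ S b x| / exitProb μ S a x} with hRdef
      have hRne : R.Nonempty := by
        by_contra h
        rw [Set.not_nonempty_iff_eq_empty] at h
        have : epsRatio μ S a b = 0 := by
          rw [epsRatio, ← hRdef, h, Real.sSup_empty]
        linarith [hεle, this]
      have hRfin : R.Finite := by
        refine Set.Finite.subset (((bdry_finite hS hfin).image
          (fun y => |exitProb μ S a y - exitProb μ S b y| / exitProb μ S a y))) ?_
        rintro r ⟨y, hy, -, rfl⟩
        exact ⟨y, hy, rfl⟩
      have hmem : sSup R ∈ R := hRne.csSup_mem hRfin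
      obtain ⟨y, hy, hp, hr⟩ := hmem
      refine ⟨y, hy, hp, ?_⟩
      rw [← hr, epsRatio, ← hRdef]
    rw [hxw]
    simp only [dif_pos hR]
    exact hR.choose_spec
  -- the normalized exit functions
  set Pf : Set G → G → ℝ :=
    fun S g => exitProb μ S g (xw S) / exitProb μ S a (xw S) with hPf
  -- basic eventual facts
  have hev0 : ∀ᶠ S in (u : Filter (Set G)), S.Finite ∧ a ∈ S ∧ b ∈ S
      ∧ xw S ∈ bdry μ S ∧ 0 < exitProb μ S a (xw S)
      ∧ |exitProb μ S a (xw S) - exitProb μ S b (xw S)| / exitProb μ S a (xw S)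
          = epsRatio μ S a b ∧ ε ≤ epsRatio μ S a b := by
    refine (hEv ∅ Set.finite_empty).mono fun S hS => ?_
    obtain ⟨h1, h2, h3⟩ := hS
    obtain ⟨h4, h5, h6⟩ := hattain S h1 h3
    exact ⟨h1, h2 (Or.inr (by simp)), h2 (Or.inr (by simp)), h4, h5, h6, h3⟩
  -- connecting paths and their position sets
  have hev_bounds : ∀ g : G, ∀ᶠ S in (u : Filter (Set G)),
      g ∈ S ∧ wR μ ((hgen (g⁻¹ * a)).choose) ≤ Pf S g
        ∧ Pf S g ≤ 1 / wR μ ((hgen (a⁻¹ * g)).choose) := by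
    intro g
    set La := (hgen (a⁻¹ * g)).choose with hLa
    set Lg := (hgen (g⁻¹ * a)).choose with hLg
    have hLaP : a * La.prod = g := by rw [(hgen (a⁻¹ * g)).choose_spec.2]; simp
    have hLgP : g * Lg.prod = a := by rw [(hgen (g⁻¹ * a)).choose_spec.2]; simp
    have hwLa : 0 < wR μ La := wR_pos hpos fun s hs => ne_of_gt ((hgen (a⁻¹ * g)).choose_spec.1 s hs)
    have hwLg : 0 < wR μ Lg := wR_pos hpos fun s hs => ne_of_gt ((hgen (g⁻¹ * a)).choose_spec.1 s hs)
    set PathF : Set G := ((fun k => a * (La.take k).prod) '' (Set.Iic La.length))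
      ∪ ((fun k => g * (Lg.take k).prod) '' (Set.Iic Lg.length)) with hPathF
    have hPathfin : PathF.Finite :=
      ((Set.finite_Iic La.length).image _).union ((Set.finite_Iic Lg.length).image _)
    refine ((hEv PathF hPathfin).and hev0).mono fun S hS => ?_
    obtain ⟨⟨hSfin, hsub, -⟩, -, -, -, hxb, hpa, -, -⟩ := hS
    have hgS : g ∈ S := by
      refine hsub (Or.inl (Or.inr ⟨0, by simp, by simp⟩))
    have hx : xw S ∉ S := hxb.1
    have hupper := exitProb_path_le hpos hfin hsum hx La
      (fun k hk => hsub (Or.inl (Or.inl ⟨k, hk, rfl⟩)))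
    rw [hLaP] at hupper
    have hlower := exitProb_path_le hpos hfin hsum hx Lg
      (fun k hk => hsub (Or.inl (Or.inr ⟨k, hk, rfl⟩)))
    rw [hLgP] at hlower
    have hpg : 0 ≤ exitProb μ S g (xw S) := exitProb_nonneg hpos
    refine ⟨hgS, ?_, ?_⟩
    · rw [hPf]
      rw [le_div_iff₀ hpa]
      have : wR μ Lg = (Lg.map μ).prod := rfl
      rw [this]
      linarith [hlower]
    · rw [hPf]
      rw [div_le_div_iff₀ hpa hwLa]
      have : wR μ La = (La.map μ).prod := rfl
      nlinarith [hupper]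
  -- limits along the ultrafilter
  have hlim : ∀ g : G, ∃ r : ℝ, Tendsto (fun S => Pf S g) (u : Filter (Set G)) (𝓝 r) ∧
      wR μ ((hgen (g⁻¹ * a)).choose) ≤ r ∧ r ≤ 1 / wR μ ((hgen (a⁻¹ * g)).choose) := by
    intro g
    have hK : IsCompact (Set.Icc (wR μ ((hgen (g⁻¹ * a)).choose))
        (1 / wR μ ((hgen (a⁻¹ * g)).choose))) := isCompact_Icc
    have hmem : ↑(u.map (fun S => Pf S g)) ≤ 𝓟 (Set.Icc (wR μ ((hgen (g⁻¹ * a)).choose))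
        (1 / wR μ ((hgen (a⁻¹ * g)).choose))) := by
      rw [Ultrafilter.coe_map, Filter.le_principal_iff, Filter.mem_map]
      exact (hev_bounds g).mono fun S hS => ⟨hS.2.1, hS.2.2⟩
    obtain ⟨r, hrK, hler⟩ := hK.ultrafilter_le_nhds (u.map fun S => Pf S g) hmem
    refine ⟨r, ?_, hrK.1, hrK.2⟩
    rw [Filter.Tendsto, ← Ultrafilter.coe_map]
    exact hler
  set f : G → ℝ := fun g => (hlim g).choose with hf
  have hft : ∀ g, Tendsto (fun S => Pf S g) (u : Filter (Set G)) (𝓝 (f g)) :=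
    fun g => (hlim g).choose_spec.1
  have hfpos : ∀ g, 0 < f g := by
    intro g
    have h1 := (hlim g).choose_spec.2.1
    have h2 : 0 < wR μ ((hgen (g⁻¹ * a)).choose) :=
      wR_pos hpos fun s hs => ne_of_gt ((hgen (g⁻¹ * a)).choose_spec.1 s hs)
    linarith
  have hfa : f a = 1 := by
    have h1 : Tendsto (fun S => Pf S a) (u : Filter (Set G)) (𝓝 1) := by
      refine Tendsto.congr' ?_ tendsto_const_nhds
      exact hev0.mono fun S hS => by
        rw [hPf]
        exact (div_self (ne_of_gt hS.2.2.2.2.1)).symm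
    exact tendsto_nhds_unique (hft a) h1
  have hfb : ε ≤ |f b - 1| := by
    have h1 : Tendsto (fun S => |Pf S b - 1|) (u : Filter (Set G)) (𝓝 |f b - 1|) :=
      ((hft b).sub_const 1).abs
    refine ge_of_tendsto h1 ?_
    refine hev0.mono fun S hS => ?_
    obtain ⟨-, -, -, -, hpa, hratio, hεle⟩ := hS
    have : |Pf S b - 1| = |exitProb μ S a (xw S) - exitProb μ S b (xw S)|
        / exitProb μ S a (xw S) := by
      rw [hPf]
      rw [div_sub_one (ne_of_gt hpa), abs_div, abs_of_pos hpa, abs_sub_comm]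
    rw [this, hratio]
    exact hεle
  have hharm : IsMuHarmonic μ f := by
    intro g
    rw [finsum_mu_eq hfin]
    have hrhs : Tendsto (fun S => ∑ s ∈ hfin.toFinset, μ s * Pf S (g * s))
        (u : Filter (Set G)) (𝓝 (∑ s ∈ hfin.toFinset, μ s * f (g * s))) :=
      tendsto_finset_sum _ fun s _ => (hft (g * s)).const_mul (μ s)
    have hev_eq : ∀ᶠ S in (u : Filter (Set G)),
        (fun S => ∑ s ∈ hfin.toFinset, μ s * Pf S (g * s)) S = (fun S => Pf S g) S := by
      refine ((hev_bounds g).and hev0).mono fun S hS => ?_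
      obtain ⟨⟨hgS, -⟩, -, -, -, hxb, hpa, -, -⟩ := hS
      have hx : xw S ∉ S := hxb.1
      have hrec := exitProb_rec hpos hfin hsum hgS hx
      simp only [hPf]
      rw [hrec, Finset.sum_div]
      exact Finset.sum_congr rfl fun s _ => by rw [mul_div_assoc]
    have h2 : Tendsto (fun S => Pf S g) (u : Filter (Set G))
        (𝓝 (∑ s ∈ hfin.toFinset, μ s * f (g * s))) := Tendsto.congr' hev_eq hrhs
    exact tendsto_nhds_unique (hft g) h2
  refine ⟨f, hfpos, hharm, a, b, ?_⟩
  rw [hfa]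
  intro h
  rw [← h] at hfb
  simp at hfb
  linarith
end RWaux

/-- There exists a non-constant positive `μ`-harmonic function if and only if there
exist `a, b ∈ G` such that `ε(S; a, b)` does not tend to `0` as `S → G`. -/
theorem positive_harmonic_iff_eps_not_tendsto_zero
    {G : Type*} [Group G] [Countable G] (μ : G → ℝ)
    (hpos : ∀ s : G, 0 ≤ μ s) (hfin : (Function.support μ).Finite)
    (hsum : ∑ᶠ s : G, μ s = 1)
    (hgen : ∀ g : G, ∃ L : List G, (∀ s ∈ L, 0 < μ s) ∧ L.prod = g) :
    (∃ f : G → ℝ, (∀ g : G, 0 < f g) ∧ IsMuHarmonic μ f ∧ ∃ a b : G, f a ≠ f b) ↔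
      (∃ a b : G, ∃ ε : ℝ, 0 < ε ∧ ∀ F : Set G, F.Finite →
        ∃ S : Set G, S.Finite ∧ F ∪ {a, b} ⊆ S ∧ ε ≤ epsRatio μ S a b) := by
  constructor
  · rintro ⟨f, hfpos, hharm, a, b, hne⟩
    rcases finite_or_infinite G with hG | hG
    · exact absurd (RWaux.harmonic_const_of_finite hpos hfin hsum hgen hharm a b) hne
    · obtain ⟨ε, h1, h2⟩ := RWaux.forward_infinite hpos hfin hsum hgen hfpos hharm hne
      exact ⟨a, b, ε, h1, h2⟩
  · rintro ⟨a, b, ε, hε, hall⟩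
    exact RWaux.backward hpos hfin hsum hgen hε hall
end

section
/- Suppose there exist a, b ∈ G, ε > 0, a sequence of finite sets S_n ⊆ G with a, b ∈ S_n for all n and S_n → G (every element of G lies in S_n for all sufficiently large n), and elements x_n ∈ ∂S_n with μ_{S_n}(a,x_n) > 0 such that |μ_{S_n}(a,x_n) − μ_{S_n}(b,x_n)| > ε·μ_{S_n}(a,x_n) for all n. Then there exists a non-constant μ-harmonic function f : G → ℝ with f(g) > 0 for all g ∈ G. -/
namespace EpsAux

open scoped ENNReal

variable {G : Type*} [Group G]

abbrev cnd (S : Set G) (g x : G) (L : List G) : Prop :=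
  (∀ k < L.length, g * (L.take k).prod ∈ S) ∧ g * L.prod = x

noncomputable def wt (μ : G → ℝ) (L : List G) : ℝ≥0∞ :=
  (L.map fun s => ENNReal.ofReal (μ s)).prod

open Classical in
noncomputable def Eex (μ : G → ℝ) (S : Set G) (g x : G) : ℝ≥0∞ :=
  ∑' L : List G, if cnd S g x L then wt μ L else 0

variable {μ : G → ℝ} {S : Set G}

lemma wt_nil : wt μ [] = 1 := rfl

lemma wt_cons {s : G} {L : List G} : wt μ (s :: L) = ENNReal.ofReal (μ s) * wt μ L := by
  simp [wt]

lemma wt_append {L M : List G} : wt μ (L ++ M) = wt μ L * wt μ M := by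
  simp [wt]

lemma wt_ne_top {L : List G} : wt μ L ≠ ⊤ := by
  induction L with
  | nil => simp [wt]
  | cons s L ih => rw [wt_cons]; exact ENNReal.mul_ne_top ENNReal.ofReal_ne_top ih

lemma wt_toReal (hpos : ∀ s, 0 ≤ μ s) {L : List G} : (wt μ L).toReal = (L.map μ).prod := by
  induction L with
  | nil => simp [wt]
  | cons s L ih =>
    rw [wt_cons, ENNReal.toReal_mul, ENNReal.toReal_ofReal (hpos s), ih]
    simp

lemma exitProb_eq (hpos : ∀ s, 0 ≤ μ s) (S : Set G) (g x : G) :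
    exitProb μ S g x = (Eex μ S g x).toReal := by
  classical
  rw [Eex, ENNReal.tsum_toReal_eq (fun L => by split <;> simp [wt_ne_top])]
  simp only [exitProb]
  refine tsum_congr fun L => ?_
  by_cases h : cnd S g x L
  · rw [if_pos h, if_pos h, wt_toReal hpos]
  · rw [if_neg h, if_neg h]; simp

lemma tsum_list_cons (F : List G → ℝ≥0∞) (h0 : F [] = 0) :
    ∑' L : List G, F L = ∑' s : G, ∑' L : List G, F (s :: L) := by
  have hinj : Function.Injective (fun p : G × List G => p.1 :: p.2) := by
    rintro ⟨s, L⟩ ⟨t, M⟩ h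
    simp only [List.cons.injEq] at h
    obtain ⟨rfl, rfl⟩ := h; rfl
  have hsupp : Function.support F ⊆ Set.range (fun p : G × List G => p.1 :: p.2) := by
    intro L hL
    cases L with
    | nil => exact absurd h0 hL
    | cons s t => exact ⟨(s, t), rfl⟩
  rw [← Function.Injective.tsum_eq hinj hsupp]
  exact ENNReal.tsum_prod (f := fun s L => F (s :: L))

lemma cnd_cons {g x s : G} {L : List G} (hg : g ∈ S) :
    cnd S g x (s :: L) ↔ cnd S (g * s) x L := by
  constructor
  · rintro ⟨h1, h2⟩
    refine ⟨fun j hj => ?_, by simpa [mul_assoc] using h2⟩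
    have := h1 (j + 1) (by simpa using Nat.succ_lt_succ hj)
    simpa [List.take_succ_cons, mul_assoc] using this
  · rintro ⟨h1, h2⟩
    refine ⟨fun k hk => ?_, by simpa [mul_assoc] using h2⟩
    cases k with
    | zero => simpa using hg
    | succ j =>
      have := h1 j (Nat.lt_of_succ_lt_succ (by simpa using hk))
      simpa [List.take_succ_cons, mul_assoc] using this

lemma Eex_step {g x : G} (hg : g ∈ S) (hx : x ∉ S) :
    Eex μ S g x = ∑' s : G, ENNReal.ofReal (μ s) * Eex μ S (g * s) x := by
  classical
  rw [Eex, tsum_list_cons _ (by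
    rw [if_neg]; rintro ⟨-, h2⟩; simp only [List.prod_nil, mul_one] at h2; exact hx (h2 ▸ hg))]
  refine tsum_congr fun s => ?_
  rw [Eex, ← ENNReal.tsum_mul_left]
  refine tsum_congr fun L => ?_
  by_cases h : cnd S (g * s) x L
  · rw [if_pos ((cnd_cons hg).mpr h), if_pos h, wt_cons]
  · rw [if_neg (fun hc => h ((cnd_cons hg).mp hc)), if_neg h, mul_zero]

open Classical in
noncomputable def Aseq (μ : G → ℝ) (S : Set G) (x : G) (n : ℕ) (g : G) : ℝ≥0∞ :=
  ∑' L : List G, if L.length = n ∧ cnd S g x L then wt μ L else 0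

lemma Eex_eq_tsum_Aseq {g x : G} : Eex μ S g x = ∑' n : ℕ, Aseq μ S x n g := by
  classical
  rw [Eex]
  have h1 : ∀ L : List G, (if cnd S g x L then wt μ L else 0)
      = ∑' n : ℕ, if L.length = n ∧ cnd S g x L then wt μ L else 0 := by
    intro L
    rw [tsum_eq_single L.length (fun n hn => by rw [if_neg]; rintro ⟨h, -⟩; exact hn h.symm)]
    simp
  rw [tsum_congr h1, ENNReal.tsum_comm]
  exact tsum_congr fun n => rfl

open Classical in
lemma Aseq_zero {g x : G} : Aseq μ S x 0 g = if g = x then 1 else 0 := by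
  classical
  rw [Aseq, tsum_eq_single ([] : List G) (fun L hL => by
    rw [if_neg]; rintro ⟨h1, -⟩; exact hL (List.length_eq_zero_iff.mp h1))]
  by_cases h : g = x
  · rw [if_pos h, if_pos ⟨rfl, by simp, by simpa using h⟩]; rfl
  · rw [if_neg h, if_neg (by rintro ⟨-, -, h2⟩; exact h (by simpa using h2))]

open Classical in
lemma Aseq_zero_mem {g x : G} (hg : g ∈ S) (hx : x ∉ S) : Aseq μ S x 0 g = 0 := by
  rw [Aseq_zero, if_neg]; rintro rfl; exact hx hg

lemma Aseq_succ {g x : G} {n : ℕ} (hg : g ∈ S) :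
    Aseq μ S x (n + 1) g = ∑' s : G, ENNReal.ofReal (μ s) * Aseq μ S x n (g * s) := by
  classical
  rw [Aseq, tsum_list_cons _ (by rw [if_neg]; rintro ⟨h1, -⟩; simp at h1)]
  refine tsum_congr fun s => ?_
  rw [Aseq, ← ENNReal.tsum_mul_left]
  refine tsum_congr fun L => ?_
  by_cases h : L.length = n ∧ cnd S (g * s) x L
  · rw [if_pos ⟨by simp [h.1], (cnd_cons hg).mpr h.2⟩, if_pos h, wt_cons]
  · rw [if_neg (fun hc => h ⟨by simpa using hc.1, (cnd_cons hg).mp hc.2⟩), if_neg h, mul_zero]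

lemma Aseq_succ_notMem {g x : G} {n : ℕ} (hg : g ∉ S) : Aseq μ S x (n + 1) g = 0 := by
  classical
  rw [Aseq]
  refine ENNReal.tsum_eq_zero.mpr fun L => ?_
  rw [if_neg]
  rintro ⟨hlen, h1, -⟩
  have h0 : 0 < L.length := by omega
  exact hg (by simpa using h1 0 h0)

lemma sum_ofReal_eq_one (hpos : ∀ s, 0 ≤ μ s) (hfin : (Function.support μ).Finite)
    (hsum : ∑ᶠ s : G, μ s = 1) : ∑' s : G, ENNReal.ofReal (μ s) = 1 := by
  classical
  rw [tsum_eq_sum (s := hfin.toFinset) (fun s hs => by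
    have h0 : μ s = 0 := Function.notMem_support.mp (by simpa using hs)
    simp [h0])]
  rw [← ENNReal.ofReal_sum_of_nonneg (fun s _ => hpos s)]
  rw [← finsum_eq_sum μ hfin, hsum, ENNReal.ofReal_one]

lemma Aseq_partial_le (hpos : ∀ s, 0 ≤ μ s) (hfin : (Function.support μ).Finite)
    (hsum : ∑ᶠ s : G, μ s = 1) {x : G} (hx : x ∉ S) :
    ∀ n : ℕ, ∀ g : G, ∑ m ∈ Finset.range (n + 1), Aseq μ S x m g ≤ 1 := by
  intro n
  induction n with
  | zero =>
    intro g
    rw [Finset.sum_range_one, Aseq_zero]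
    split <;> simp
  | succ n ih =>
    intro g
    by_cases hg : g ∈ S
    · rw [Finset.sum_range_succ', Aseq_zero_mem hg hx, add_zero]
      calc ∑ i ∈ Finset.range (n + 1), Aseq μ S x (i + 1) g
          = ∑ i ∈ Finset.range (n + 1), ∑' s : G, ENNReal.ofReal (μ s) * Aseq μ S x i (g * s) :=
            Finset.sum_congr rfl fun i _ => Aseq_succ hg
        _ = ∑' s : G, ∑ i ∈ Finset.range (n + 1), ENNReal.ofReal (μ s) * Aseq μ S x i (g * s) :=
            (Summable.tsum_finsetSum fun i _ => ENNReal.summable).symm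
        _ = ∑' s : G, ENNReal.ofReal (μ s) * ∑ i ∈ Finset.range (n + 1), Aseq μ S x i (g * s) :=
            tsum_congr fun s => (Finset.mul_sum _ _ _).symm
        _ ≤ ∑' s : G, ENNReal.ofReal (μ s) * 1 :=
            ENNReal.tsum_le_tsum fun s => mul_le_mul_right (ih (g * s)) _
        _ = 1 := by simp [sum_ofReal_eq_one hpos hfin hsum]
    · rw [Finset.sum_range_succ']
      have h1 : ∀ i ∈ Finset.range (n + 1), Aseq μ S x (i + 1) g = 0 :=
        fun i _ => Aseq_succ_notMem hg
      rw [Finset.sum_congr rfl h1]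
      simp only [Finset.sum_const_zero, zero_add]
      rw [Aseq_zero]; split <;> simp

lemma Eex_le_one (hpos : ∀ s, 0 ≤ μ s) (hfin : (Function.support μ).Finite)
    (hsum : ∑ᶠ s : G, μ s = 1) {g x : G} (hx : x ∉ S) : Eex μ S g x ≤ 1 := by
  rw [Eex_eq_tsum_Aseq, ENNReal.tsum_eq_iSup_sum]
  refine iSup_le fun t => ?_
  obtain ⟨n, hn⟩ := t.exists_nat_subset_range
  calc ∑ m ∈ t, Aseq μ S x m g ≤ ∑ m ∈ Finset.range (n + 1), Aseq μ S x m g :=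
        Finset.sum_le_sum_of_subset (hn.trans (Finset.range_subset_range.mpr (by omega)))
    _ ≤ 1 := Aseq_partial_le hpos hfin hsum hx n g

lemma Eex_ne_top (hpos : ∀ s, 0 ≤ μ s) (hfin : (Function.support μ).Finite)
    (hsum : ∑ᶠ s : G, μ s = 1) {g x : G} (hx : x ∉ S) : Eex μ S g x ≠ ⊤ :=
  ne_top_of_le_ne_top ENNReal.one_ne_top (Eex_le_one hpos hfin hsum hx)

lemma cnd_append {g h x : G} {L M : List G}
    (h1 : ∀ k < L.length, g * (L.take k).prod ∈ S) (h2 : g * L.prod = h)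
    (hM : cnd S h x M) : cnd S g x (L ++ M) := by
  constructor
  · intro k hk
    rcases lt_or_ge k L.length with hkL | hkL
    · rw [List.take_append_of_le_length hkL.le]
      exact h1 k hkL
    · obtain ⟨j, rfl⟩ : ∃ j, k = L.length + j := ⟨k - L.length, by omega⟩
      have hj : j < M.length := by
        have := hk; rw [List.length_append] at this; omega
      rw [List.take_append, List.take_of_length_le (by omega), Nat.add_sub_cancel_left]
      rw [List.prod_append, ← mul_assoc, h2]
      exact hM.1 j hj
  · rw [List.prod_append, ← mul_assoc, h2]
    exact hM.2

lemma Eex_mul_le {g h x : G} {L : List G}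
    (h1 : ∀ k < L.length, g * (L.take k).prod ∈ S) (h2 : g * L.prod = h) :
    wt μ L * Eex μ S h x ≤ Eex μ S g x := by
  classical
  rw [Eex, Eex, ← ENNReal.tsum_mul_left]
  refine Summable.tsum_le_tsum_of_inj (fun M => L ++ M)
    (fun M₁ M₂ hMM => List.append_cancel_left hMM)
    (fun c _ => zero_le) (fun M => ?_) ENNReal.summable ENNReal.summable
  by_cases hM : cnd S h x M
  · rw [if_pos hM, if_pos (cnd_append h1 h2 hM), wt_append]
  · rw [if_neg hM, mul_zero]; exact zero_le

lemma exitProb_harmonic (hpos : ∀ s, 0 ≤ μ s) (hfin : (Function.support μ).Finite)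
    (hsum : ∑ᶠ s : G, μ s = 1) {g x : G} (hx : x ∉ S) (hg : g ∈ S) :
    exitProb μ S g x = ∑ s ∈ hfin.toFinset, μ s * exitProb μ S (g * s) x := by
  classical
  rw [exitProb_eq hpos, Eex_step hg hx]
  rw [tsum_eq_sum (s := hfin.toFinset) (fun s hs => by
    have h0 : μ s = 0 := Function.notMem_support.mp (by simpa using hs)
    simp [h0])]
  rw [ENNReal.toReal_sum (fun s _ => ENNReal.mul_ne_top ENNReal.ofReal_ne_top
    (Eex_ne_top hpos hfin hsum hx))]
  refine Finset.sum_congr rfl fun s _ => ?_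
  rw [ENNReal.toReal_mul, ENNReal.toReal_ofReal (hpos s), ← exitProb_eq hpos]

lemma exitProb_harnack (hpos : ∀ s, 0 ≤ μ s) (hfin : (Function.support μ).Finite)
    (hsum : ∑ᶠ s : G, μ s = 1) {g h x : G} (hx : x ∉ S) {L : List G}
    (h1 : ∀ k < L.length, g * (L.take k).prod ∈ S) (h2 : g * L.prod = h) :
    (L.map μ).prod * exitProb μ S h x ≤ exitProb μ S g x := by
  have hle := Eex_mul_le (μ := μ) (x := x) h1 h2
  have h3 := ENNReal.toReal_mono (Eex_ne_top hpos hfin hsum hx) hle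
  rwa [ENNReal.toReal_mul, wt_toReal hpos, ← exitProb_eq hpos, ← exitProb_eq hpos] at h3

end EpsAux


open EpsAux Filter in
/-- If there are `a, b`, `ε > 0`, a sequence of finite sets `Sₙ → G` containing `a, b`,
and boundary points `xₙ ∈ ∂Sₙ` with `μ_{Sₙ}(a,xₙ) > 0` and
`|μ_{Sₙ}(a,xₙ) − μ_{Sₙ}(b,xₙ)| > ε μ_{Sₙ}(a,xₙ)`, then there exists a non-constant
positive `μ`-harmonic function on `G`. -/
theorem eps_bounded_below_implies_positive_harmonic
    {G : Type*} [Group G] [Countable G] (μ : G → ℝ)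
    (hpos : ∀ s : G, 0 ≤ μ s) (hfin : (Function.support μ).Finite)
    (hsum : ∑ᶠ s : G, μ s = 1)
    (hgen : ∀ g : G, ∃ L : List G, (∀ s ∈ L, 0 < μ s) ∧ L.prod = g)
    (a b : G) (ε : ℝ) (hε : 0 < ε)
    (S : ℕ → Set G) (hSfin : ∀ n, (S n).Finite)
    (haS : ∀ n, a ∈ S n) (hbS : ∀ n, b ∈ S n)
    (hStoG : ∀ g : G, ∃ N : ℕ, ∀ n ≥ N, g ∈ S n)
    (x : ℕ → G) (hx : ∀ n, x n ∈ bdry μ (S n))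
    (hxpos : ∀ n, 0 < exitProb μ (S n) a (x n))
    (hgap : ∀ n, ε * exitProb μ (S n) a (x n)
      < |exitProb μ (S n) a (x n) - exitProb μ (S n) b (x n)|) :
    ∃ f : G → ℝ, (∀ g : G, 0 < f g) ∧ IsMuHarmonic μ f ∧ ∃ u v : G, f u ≠ f v := by
  classical
  -- paths from `a` to `g` and from `g` to `a`
  choose P hPpos hPprod using fun g : G => hgen (a⁻¹ * g)
  choose Q hQpos hQprod using fun g : G => hgen (g⁻¹ * a)
  have hPa : ∀ g : G, a * (P g).prod = g := fun g => by rw [hPprod, mul_inv_cancel_left]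
  have hQa : ∀ g : G, g * (Q g).prod = a := fun g => by rw [hQprod, mul_inv_cancel_left]
  -- eventual containment of finite lists of points
  have hlist : ∀ l : List G, ∃ N : ℕ, ∀ n ≥ N, ∀ y ∈ l, y ∈ S n := by
    intro l
    induction l with
    | nil => exact ⟨0, by simp⟩
    | cons y l ih =>
      obtain ⟨N1, hN1⟩ := hStoG y
      obtain ⟨N2, hN2⟩ := ih
      refine ⟨max N1 N2, fun n hn z hz => ?_⟩
      rcases List.mem_cons.mp hz with rfl | hz
      · exact hN1 n (le_trans (le_max_left _ _) hn)
      · exact hN2 n (le_trans (le_max_right _ _) hn) z hz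
  set pts : G → List G → List G :=
    fun y L => (List.range L.length).map fun k => y * (L.take k).prod with hpts_def
  have hpts : ∀ (y : G) (L : List G) (n : ℕ), (∀ z ∈ pts y L, z ∈ S n) →
      ∀ k < L.length, y * (L.take k).prod ∈ S n :=
    fun y L n h k hk => h _ (List.mem_map.mpr ⟨k, List.mem_range.mpr hk, rfl⟩)
  choose N hN using fun g : G => hlist (g :: (pts a (P g) ++ pts g (Q g)))
  set v : ℕ → G → ℝ := fun n g => exitProb μ (S n) g (x n) with hv_def
  have hxn : ∀ n, x n ∉ S n := fun n => (hx n).1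
  have hva : ∀ n, 0 < v n a := hxpos
  have cPpos : ∀ g : G, 0 < ((P g).map μ).prod := by
    intro g
    refine List.prod_pos fun r hr => ?_
    obtain ⟨s, hs, rfl⟩ := List.mem_map.mp hr
    exact hPpos g s hs
  have cQpos : ∀ g : G, 0 < ((Q g).map μ).prod := by
    intro g
    refine List.prod_pos fun r hr => ?_
    obtain ⟨s, hs, rfl⟩ := List.mem_map.mp hr
    exact hQpos g s hs
  set lo : G → ℝ := fun g => ((Q g).map μ).prod with hlo_def
  set hi : G → ℝ := fun g => max (lo g) (((P g).map μ).prod)⁻¹ with hhi_def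
  have hlohi : ∀ g, lo g ≤ hi g := fun g => le_max_left _ _
  have hmemS : ∀ g n, N g ≤ n → g ∈ S n := fun g n hn => hN g n hn g List.mem_cons_self
  -- Harnack bounds
  have hlow : ∀ g n, N g ≤ n → lo g * v n a ≤ v n g := by
    intro g n hn
    have h1 : ∀ k < (Q g).length, g * ((Q g).take k).prod ∈ S n := by
      refine hpts g (Q g) n (fun z hz => hN g n hn z ?_)
      exact List.mem_cons.mpr (Or.inr (List.mem_append.mpr (Or.inr hz)))
    exact exitProb_harnack hpos hfin hsum (hxn n) h1 (hQa g)
  have hup : ∀ g n, N g ≤ n → ((P g).map μ).prod * v n g ≤ v n a := by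
    intro g n hn
    have h1 : ∀ k < (P g).length, a * ((P g).take k).prod ∈ S n := by
      refine hpts a (P g) n (fun z hz => hN g n hn z ?_)
      exact List.mem_cons.mpr (Or.inr (List.mem_append.mpr (Or.inl hz)))
    exact exitProb_harnack hpos hfin hsum (hxn n) h1 (hPa g)
  set f : ℕ → G → ℝ := fun n g => v n g / v n a with hf_def
  have hflo : ∀ g n, N g ≤ n → lo g ≤ f n g := by
    intro g n hn
    rw [hf_def, le_div_iff₀ (hva n)]
    exact hlow g n hn
  have hfhi : ∀ g n, N g ≤ n → f n g ≤ hi g := by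
    intro g n hn
    refine le_trans ?_ (le_max_right (lo g) _)
    rw [hf_def, div_le_iff₀ (hva n)]
    calc v n g = (((P g).map μ).prod)⁻¹ * (((P g).map μ).prod * v n g) :=
          (inv_mul_cancel_left₀ (cPpos g).ne' _).symm
      _ ≤ (((P g).map μ).prod)⁻¹ * v n a :=
          mul_le_mul_of_nonneg_left (hup g n hn) (inv_nonneg.mpr (cPpos g).le)
  set u : ℕ → G → ℝ := fun n g => max (lo g) (min (f n g) (hi g)) with hu_def
  have hu_eq : ∀ g n, N g ≤ n → u n g = f n g := by
    intro g n hn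
    rw [hu_def]
    dsimp only
    rw [min_eq_left (hfhi g n hn), max_eq_right (hflo g n hn)]
  have huK : ∀ n, u n ∈ Set.pi Set.univ (fun g : G => Set.Icc (lo g) (hi g)) := by
    intro n g _
    exact ⟨le_max_left _ _, max_le (hlohi g) (min_le_right _ _)⟩
  have hK : IsCompact (Set.pi Set.univ fun g : G => Set.Icc (lo g) (hi g)) :=
    isCompact_univ_pi fun g => isCompact_Icc
  obtain ⟨f0, hf0, φ, hφ, hconv⟩ := hK.tendsto_subseq huK
  have hφk : ∀ k : ℕ, k ≤ φ k := fun k => hφ.le_apply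
  have hpt : ∀ g : G, Tendsto (fun k => u (φ k) g) atTop (nhds (f0 g)) :=
    fun g => tendsto_pi_nhds.mp hconv g
  have hfpt : ∀ g : G, Tendsto (fun k => f (φ k) g) atTop (nhds (f0 g)) := by
    intro g
    refine (hpt g).congr' ?_
    filter_upwards [eventually_ge_atTop (N g)] with k hk
    exact hu_eq g (φ k) (le_trans hk (hφk k))
  have hf0pos : ∀ g : G, 0 < f0 g :=
    fun g => lt_of_lt_of_le (cQpos g) ((hf0 g (Set.mem_univ g)).1)
  have hfa : f0 a = 1 := by
    have h1 : Tendsto (fun k => f (φ k) a) atTop (nhds 1) := by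
      have : ∀ k : ℕ, f (φ k) a = 1 := fun k => div_self (hva (φ k)).ne'
      simpa [this] using tendsto_const_nhds
    exact tendsto_nhds_unique (hfpt a) h1
  have hharm : ∀ g : G, f0 g = ∑ s ∈ hfin.toFinset, μ s * f0 (g * s) := by
    intro g
    have hstep : ∀ n, N g ≤ n → f n g = ∑ s ∈ hfin.toFinset, μ s * f n (g * s) := by
      intro n hn
      have h1 := exitProb_harmonic (S := S n) hpos hfin hsum (hxn n) (hmemS g n hn)
      rw [hf_def]
      dsimp only
      rw [show exitProb μ (S n) g (x n) = v n g from rfl] at h1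
      rw [h1, Finset.sum_div]
      exact Finset.sum_congr rfl fun s _ => by rw [mul_div_assoc]
    have hT2 : Tendsto (fun k => ∑ s ∈ hfin.toFinset, μ s * f (φ k) (g * s)) atTop
        (nhds (∑ s ∈ hfin.toFinset, μ s * f0 (g * s))) :=
      tendsto_finset_sum _ fun s _ => (hfpt (g * s)).const_mul (μ s)
    refine tendsto_nhds_unique (hfpt g) (hT2.congr' ?_)
    filter_upwards [eventually_ge_atTop (N g)] with k hk
    exact (hstep (φ k) (le_trans hk (hφk k))).symm
  have hεlt : ∀ n : ℕ, ε ≤ |1 - f n b| := by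
    intro n
    have h1 : 1 - f n b = (v n a - v n b) / v n a := by
      rw [hf_def]
      dsimp only
      rw [sub_div, div_self (hva n).ne']
    rw [h1, abs_div, abs_of_pos (hva n), le_div_iff₀ (hva n)]
    exact (hgap n).le
  have hfb : ε ≤ |1 - f0 b| := by
    have hT : Tendsto (fun k => |1 - f (φ k) b|) atTop (nhds |1 - f0 b|) :=
      (tendsto_const_nhds.sub (hfpt b)).abs
    exact ge_of_tendsto hT (Eventually.of_forall fun k => hεlt (φ k))
  refine ⟨f0, hf0pos, ?_, a, b, ?_⟩
  · intro g
    rw [hharm g]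
    refine (finsum_eq_finset_sum_of_support_subset _ ?_).symm
    intro s hs
    simp only [Function.mem_support] at hs
    have hμs : μ s ≠ 0 := fun h0 => hs (by rw [h0, zero_mul])
    simpa using hμs
  · intro h
    rw [hfa] at h
    have h0 : |1 - f0 b| = 0 := by rw [← h]; simp
    rw [h0] at hfb
    exact absurd hfb (not_le.mpr hε)
end
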